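/- arXiv:2401.15423 — 2 statements merged into one kernel-verified Lean document; each statement's English description precedes it below -/
import Mathlib

section
/- Haar coefficient characterization of bounded fractional variation (Proposition 7.8). Let d ≥ 1 and α ∈ (0,1); set γ = (α + d − 1)/d. There exists a constant C > 0, depending only on d and α, such that for every f ∈ L¹([0,1]^d) one has, in [0,∞]: (1/C) · V̂^α f ≤ |∫_{[0,1]^d} f| + Σ_{n=0}^∞ Σ_{k ∈ {0,…,2^n−1}^d} Σ_{ε ∈ {0,1}^d \ {0}} |b_{n,k,ε}(f)| ≤ C · V̂^α f. -/
open MeasureTheory Filter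
open scoped BigOperators ENNReal Classical

noncomputable section

/-- Points of `ℝ^d` with the Euclidean norm. -/
abbrev Euc (d : ℕ) := EuclideanSpace ℝ (Fin d)

/-- The closed dyadic cube of generation `n` with lower corner `2^{-n} k` inside `[0,1]^d`. -/
def dyCube (d n : ℕ) (k : Fin d → ℕ) : Set (Euc d) :=
  {x | ∀ i, (k i : ℝ) / 2 ^ n ≤ x i ∧ x i ≤ ((k i : ℝ) + 1) / 2 ^ n}

/-- The unit cube `[0,1]^d`. -/
def uCube (d : ℕ) : Set (Euc d) := dyCube d 0 (fun _ => 0)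

/-- Volume `2^{-nd}` of a dyadic cube of generation `n`. -/
def dyVol (d n : ℕ) : ℝ := ((2 : ℝ) ^ (n * d))⁻¹

/-- A real valued function on the dyadic cubes of `[0,1]^d` (encoded by generation and
lower-corner index) is additive if its value on each cube is the sum of its values
on the `2^d` children. -/
def IsAdditiveDy (d : ℕ) (ω : ∀ _ : ℕ, (Fin d → ℕ) → ℝ) : Prop :=
  ∀ n (k : Fin d → ℕ), (∀ i, k i < 2 ^ n) →
    ω n k = ∑ j : Fin d → Fin 2, ω (n + 1) (fun i => 2 * k i + (j i : ℕ))

/-- The Haar function `g_{n,k,ε}` on `[0,1]^d`. -/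
def haarF (d n : ℕ) (k : Fin d → ℕ) (ε : Fin d → Bool) (x : Euc d) : ℝ :=
  if ∀ i, (k i : ℝ) / 2 ^ n ≤ x i ∧ x i < ((k i : ℝ) + 1) / 2 ^ n then
    (2 : ℝ) ^ (((n * d : ℕ) : ℝ) / 2) *
      ∏ i, (if ε i then (if (2 : ℝ) ^ n * x i - (k i : ℝ) < 1 / 2 then (1 : ℝ) else -1) else 1)
  else 0

/-- The Faber–Schauder coefficient `a_{n,k,ε}(ω)` of an additive function on dyadic cubes. -/
def fsCoeff (d : ℕ) (ω : ∀ _ : ℕ, (Fin d → ℕ) → ℝ) (n : ℕ) (k : Fin d → ℕ)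
    (ε : Fin d → Bool) : ℝ :=
  (2 : ℝ) ^ (((n * d : ℕ) : ℝ) / 2) *
    ∑ j : Fin d → Fin 2,
      (∏ i, (if ε i then (if j i = 0 then (1 : ℝ) else -1) else 1)) *
        ω (n + 1) (fun i => 2 * k i + (j i : ℕ))


/-- The variation `V̂^α f ∈ [0,∞]`: supremum of `∫ f g` over `g ∈ L^∞([0,1]^d)` with
`|∫_K g| ≤ |K|^γ` for every dyadic cube `K`, where `γ = (α + d - 1)/d`. -/
def hatV (d : ℕ) (α : ℝ) (f : Euc d → ℝ) : ℝ≥0∞ :=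
  ⨆ (g : Euc d → ℝ) (_ : MemLp g ⊤ (volume.restrict (uCube d)))
    (_ : ∀ n (k : Fin d → ℕ), (∀ i, k i < 2 ^ n) →
      |∫ x in dyCube d n k, g x| ≤ dyVol d n ^ ((α + (d : ℝ) - 1) / d)),
    ENNReal.ofReal (∫ x in uCube d, f x * g x)

/-- The renormalized Haar coefficient `b_{n,k,ε}(f) = 2^{-nd(γ - 1/2)} ∫ f g_{n,k,ε}`,
where `γ = (α + d - 1)/d`. -/
def bCoeff (d : ℕ) (α : ℝ) (f : Euc d → ℝ) (n : ℕ) (k : Fin d → ℕ)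
    (ε : Fin d → Bool) : ℝ :=
  (2 : ℝ) ^ (-((n * d : ℕ) : ℝ) * ((α + (d : ℝ) - 1) / d - 1 / 2)) *
    ∫ x in uCube d, f x * haarF d n k ε x

-- Stage A : dyadic geometry
namespace HaarAux

/-- The half-open dyadic cube. -/
def Qh (d n : ℕ) (k : Fin d → ℕ) : Set (Euc d) :=
  {x | ∀ i, (k i : ℝ) / 2 ^ n ≤ x i ∧ x i < ((k i : ℝ) + 1) / 2 ^ n}

variable {d : ℕ}

lemma coord_unique {n a b : ℕ} {t : ℝ} (ha : (a : ℝ) / 2 ^ n ≤ t ∧ t < ((a : ℝ) + 1) / 2 ^ n)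
    (hb : (b : ℝ) / 2 ^ n ≤ t ∧ t < ((b : ℝ) + 1) / 2 ^ n) : a = b := by
  have h2 : (0:ℝ) < 2 ^ n := by positivity
  have h1 : (a : ℝ) < (b : ℝ) + 1 := by
    have := lt_of_le_of_lt ha.1 hb.2
    rwa [div_lt_div_iff₀ h2 h2, mul_lt_mul_iff_of_pos_right h2] at this
  have h2' : (b : ℝ) < (a : ℝ) + 1 := by
    have := lt_of_le_of_lt hb.1 ha.2
    rwa [div_lt_div_iff₀ h2 h2, mul_lt_mul_iff_of_pos_right h2] at this
  have ha' : a < b + 1 := by exact_mod_cast h1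
  have hb' : b < a + 1 := by exact_mod_cast h2'
  omega

lemma Qh_unique {n : ℕ} {k k' : Fin d → ℕ} {x : Euc d} (h : x ∈ Qh d n k)
    (h' : x ∈ Qh d n k') : k = k' :=
  funext fun i => coord_unique (h i) (h' i)

/-- subset of the generation-`n` ancestor -/
lemma Qh_subset_anc (n p : ℕ) (l : Fin d → ℕ) :
    Qh d (n + p) l ⊆ Qh d n (fun i => l i / 2 ^ p) := by
  intro x hx i
  obtain ⟨h1, h2⟩ := hx i
  have hq := Nat.div_add_mod (l i) (2 ^ p)
  have hm : l i % 2 ^ p < 2 ^ p := Nat.mod_lt _ (by positivity)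
  have e1 : (2:ℝ) ^ (n + p) = 2 ^ n * 2 ^ p := by rw [pow_add]
  have h2p : (0:ℝ) < 2 ^ p := by positivity
  have h2n : (0:ℝ) < 2 ^ n := by positivity
  constructor
  · calc ((l i / 2 ^ p : ℕ) : ℝ) / 2 ^ n ≤ (l i : ℝ) / 2 ^ (n + p) := by
          rw [div_le_div_iff₀ h2n (by positivity), e1]
          have : ((l i / 2 ^ p : ℕ) : ℝ) * 2 ^ p ≤ (l i : ℝ) := by
            have : (l i / 2 ^ p) * 2 ^ p ≤ l i := Nat.div_mul_le_self _ _
            exact_mod_cast this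
          nlinarith
      _ ≤ x i := h1
  · have hl1 : (l i : ℝ) + 1 ≤ (((l i / 2 ^ p : ℕ) : ℝ) + 1) * 2 ^ p := by
      have : l i + 1 ≤ (l i / 2 ^ p + 1) * 2 ^ p := by
        calc l i + 1 = 2 ^ p * (l i / 2 ^ p) + l i % 2 ^ p + 1 := by omega
          _ ≤ 2 ^ p * (l i / 2 ^ p) + 2 ^ p := by omega
          _ = (l i / 2 ^ p + 1) * 2 ^ p := by ring
      exact_mod_cast this
    calc x i < ((l i : ℝ) + 1) / 2 ^ (n + p) := h2
      _ ≤ (((l i / 2 ^ p : ℕ) : ℝ) + 1) / 2 ^ n := by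
          rw [e1, div_le_div_iff₀ (by positivity) h2n]
          nlinarith

lemma anc_lt {n p : ℕ} {a : ℕ} (h : a < 2 ^ (n + p)) : a / 2 ^ p < 2 ^ n :=
  Nat.div_lt_of_lt_mul (by rw [← pow_add, Nat.add_comm p n]; exact h)

/-- membership in a child -/
lemma Qh_child_subset (n : ℕ) (k : Fin d → ℕ) (j : Fin d → Fin 2) :
    Qh d (n + 1) (fun i => 2 * k i + (j i : ℕ)) ⊆ Qh d n k := by
  have h := Qh_subset_anc (d := d) n 1 (fun i => 2 * k i + (j i : ℕ))
  have e : (fun i => (2 * k i + (j i : ℕ)) / 2 ^ 1) = k := by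
    funext i; have := (j i).isLt; omega
  rwa [e] at h

/-- every point of a cube lies in one of the children -/
lemma Qh_eq_union_children (n : ℕ) (k : Fin d → ℕ) :
    Qh d n k = ⋃ j : Fin d → Fin 2, Qh d (n + 1) (fun i => 2 * k i + (j i : ℕ)) := by
  apply Set.Subset.antisymm
  · intro x hx
    refine Set.mem_iUnion.2
      ⟨fun i => if x i < (2 * (k i : ℝ) + 1) / 2 ^ (n+1) then 0 else 1, fun i => ?_⟩
    obtain ⟨h1, h2'⟩ := hx i
    have e1 : (2 * (k i : ℝ)) / 2 ^ (n+1) = (k i : ℝ) / 2 ^ n := by ring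
    have e2 : (2 * (k i : ℝ) + 2) / 2 ^ (n+1) = ((k i : ℝ) + 1) / 2 ^ n := by ring
    by_cases hc : x i < (2 * (k i : ℝ) + 1) / 2 ^ (n+1)
    · simp only [hc, if_true, Fin.val_zero]
      push_cast
      constructor
      · rw [show (2 * (k i : ℝ) + 0) / 2 ^ (n+1) = (k i : ℝ) / 2 ^ n by ring]; exact h1
      · rw [show (2 * (k i : ℝ) + 0 + 1) / 2 ^ (n+1) = (2 * (k i : ℝ) + 1) / 2 ^ (n+1) by ring]
        exact hc
    · simp only [hc, if_false, Fin.val_one]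
      push_cast
      constructor
      · exact not_lt.1 hc
      · rw [show (2 * (k i : ℝ) + 1 + 1) / 2 ^ (n+1) = ((k i : ℝ) + 1) / 2 ^ n by ring]
        exact h2'
  · exact Set.iUnion_subset fun j => Qh_child_subset n k j

lemma child_ne {k k' : Fin d → ℕ} {j j' : Fin d → Fin 2}
    (h : ¬(k = k' ∧ j = j')) :
    (fun i => 2 * k i + (j i : ℕ)) ≠ (fun i => 2 * k' i + (j' i : ℕ)) := by
  intro he
  apply h
  constructor
  · funext i; have := congrFun he i; have := (j i).isLt; have := (j' i).isLt
    omega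
  · funext i
    have := congrFun he i; have h1 := (j i).isLt; have h2 := (j' i).isLt
    exact Fin.ext (by omega)

end HaarAux

namespace HaarAux
variable {d : ℕ}

lemma Qh_eq_preimage (n : ℕ) (k : Fin d → ℕ) :
    Qh d n k = ⇑((MeasurableEquiv.toLp 2 (Fin d → ℝ)).symm) ⁻¹'
      (Set.univ.pi fun i => Set.Ico ((k i : ℝ) / 2 ^ n) (((k i : ℝ) + 1) / 2 ^ n)) := by
  ext x
  simp only [Qh, Set.mem_setOf_eq, Set.mem_preimage, Set.mem_pi, Set.mem_univ, true_implies,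
    Set.mem_Ico, MeasurableEquiv.coe_toLp_symm]

lemma dyCube_eq_preimage (n : ℕ) (k : Fin d → ℕ) :
    dyCube d n k = ⇑((MeasurableEquiv.toLp 2 (Fin d → ℝ)).symm) ⁻¹'
      (Set.univ.pi fun i => Set.Icc ((k i : ℝ) / 2 ^ n) (((k i : ℝ) + 1) / 2 ^ n)) := by
  ext x
  simp only [dyCube, Set.mem_setOf_eq, Set.mem_preimage, Set.mem_pi, Set.mem_univ, true_implies,
    Set.mem_Icc, MeasurableEquiv.coe_toLp_symm]

lemma measurableSet_Qh (n : ℕ) (k : Fin d → ℕ) : MeasurableSet (Qh d n k) := by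
  rw [Qh_eq_preimage]
  exact ((MeasurableEquiv.toLp 2 (Fin d → ℝ)).symm).measurable
    (MeasurableSet.univ_pi fun i => measurableSet_Ico)

lemma measurableSet_dyCube (n : ℕ) (k : Fin d → ℕ) : MeasurableSet (dyCube d n k) := by
  rw [dyCube_eq_preimage]
  exact ((MeasurableEquiv.toLp 2 (Fin d → ℝ)).symm).measurable
    (MeasurableSet.univ_pi fun i => measurableSet_Icc)

lemma edge_sub (n a : ℕ) : ((a : ℝ) + 1) / 2 ^ n - (a : ℝ) / 2 ^ n = ((2 : ℝ) ^ n)⁻¹ := by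
  field_simp
  ring

lemma dyVol_pos (n : ℕ) : 0 < dyVol d n := by
  unfold dyVol; positivity

lemma dyVol_eq (n : ℕ) : dyVol d n = (((2 : ℝ) ^ n)⁻¹) ^ d := by
  unfold dyVol
  rw [inv_pow, pow_mul]

lemma volume_Qh (n : ℕ) (k : Fin d → ℕ) :
    volume (Qh d n k) = ENNReal.ofReal (dyVol d n) := by
  rw [Qh_eq_preimage,
    (EuclideanSpace.volume_preserving_symm_measurableEquiv_toLp (Fin d)).measure_preimage
      ((MeasurableSet.univ_pi fun i => measurableSet_Ico).nullMeasurableSet),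
    volume_pi_pi]
  simp only [Real.volume_Ico, edge_sub]
  rw [Finset.prod_const, Finset.card_univ, Fintype.card_fin,
    ← ENNReal.ofReal_pow (by positivity), dyVol_eq]

lemma volume_dyCube (n : ℕ) (k : Fin d → ℕ) :
    volume (dyCube d n k) = ENNReal.ofReal (dyVol d n) := by
  rw [dyCube_eq_preimage,
    (EuclideanSpace.volume_preserving_symm_measurableEquiv_toLp (Fin d)).measure_preimage
      ((MeasurableSet.univ_pi fun i => measurableSet_Icc).nullMeasurableSet),
    volume_pi_pi]
  simp only [Real.volume_Icc, edge_sub]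
  rw [Finset.prod_const, Finset.card_univ, Fintype.card_fin,
    ← ENNReal.ofReal_pow (by positivity), dyVol_eq]

lemma Qh_subset_dyCube (n : ℕ) (k : Fin d → ℕ) : Qh d n k ⊆ dyCube d n k :=
  fun x hx i => ⟨(hx i).1, le_of_lt (hx i).2⟩

lemma Qh_ae_eq_dyCube (n : ℕ) (k : Fin d → ℕ) : Qh d n k =ᶠ[ae volume] dyCube d n k := by
  rw [MeasureTheory.ae_eq_set]
  constructor
  · rw [Set.diff_eq_empty.2 (Qh_subset_dyCube n k)]; simp
  · rw [measure_diff (Qh_subset_dyCube n k) (measurableSet_Qh n k).nullMeasurableSet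
      (by rw [volume_Qh]; exact ENNReal.ofReal_ne_top),
      volume_Qh, volume_dyCube, tsub_self]

lemma setIntegral_Qh_dyCube (n : ℕ) (k : Fin d → ℕ) (h : Euc d → ℝ) :
    ∫ x in Qh d n k, h x = ∫ x in dyCube d n k, h x :=
  setIntegral_congr_set (Qh_ae_eq_dyCube n k)

lemma Qh_subset_uCube {n : ℕ} {k : Fin d → ℕ} (hk : ∀ i, k i < 2 ^ n) :
    Qh d n k ⊆ uCube d := by
  intro x hx i
  obtain ⟨h1, h2⟩ := hx i
  have h2n : (0:ℝ) < 2 ^ n := by positivity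
  have hk' : (k i : ℝ) + 1 ≤ 2 ^ n := by exact_mod_cast hk i
  have hx0 : (0:ℝ) ≤ x i := le_trans (by positivity) h1
  have hx1 : x i ≤ 1 := le_trans (le_of_lt h2) (by rw [div_le_one h2n]; exact hk')
  simp only [Nat.cast_zero, pow_zero, zero_div, zero_add, div_one]
  exact ⟨hx0, hx1⟩

lemma measurableSet_uCube : MeasurableSet (uCube d) := measurableSet_dyCube 0 _

lemma uCube_eq_dyCube : uCube d = dyCube d 0 (fun _ => 0) := rfl

lemma Q00_ae_uCube : Qh d 0 (fun _ => 0) =ᶠ[ae volume] uCube d :=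
  Qh_ae_eq_dyCube 0 _

lemma volume_uCube : volume (uCube d) = 1 := by
  rw [uCube_eq_dyCube, volume_dyCube]
  unfold dyVol; norm_num

instance : IsFiniteMeasure (volume.restrict (uCube d)) := by
  constructor
  rw [Measure.restrict_apply_univ, volume_uCube]
  exact ENNReal.one_lt_top

end HaarAux

namespace HaarAux
variable {d : ℕ}

/-- the sign pattern of `h_ε` on child `j` -/
def chi (d : ℕ) (ε : Fin d → Bool) (j : Fin d → Fin 2) : ℝ :=
  ∏ i, (if ε i then (if j i = 0 then (1 : ℝ) else -1) else 1)

lemma abs_chi_le_one (ε : Fin d → Bool) (j : Fin d → Fin 2) : |chi d ε j| ≤ 1 := by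
  unfold chi
  rw [Finset.abs_prod]
  apply Finset.prod_le_one (fun i _ => abs_nonneg _)
  intro i _
  rcases Bool.dichotomy (ε i) with h | h <;> rcases Fin.exists_fin_two.mp ⟨j i, rfl⟩ with _ | _ <;>
    by_cases hj : j i = 0 <;> simp [h, hj]

/-- orthogonality : for `ε ≠ 0`, `∑_j χ_ε(j) = 0` -/
lemma sum_chi_eq_zero {ε : Fin d → Bool} (hε : ε ≠ fun _ => false) :
    ∑ j : Fin d → Fin 2, chi d ε j = 0 := by
  unfold chi
  have hps := Finset.prod_univ_sum (fun _ : Fin d => (Finset.univ : Finset (Fin 2)))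
    (fun i j => (if ε i then (if j = 0 then (1:ℝ) else -1) else 1))
  rw [Fintype.piFinset_univ] at hps
  rw [← hps]
  obtain ⟨i₀, hi₀⟩ : ∃ i, ε i = true := by
    by_contra h
    push_neg at h
    exact hε (funext fun i => by simpa using h i)
  apply Finset.prod_eq_zero (Finset.mem_univ i₀)
  rw [hi₀]
  simp [Fin.sum_univ_two]

/-- orthogonality of characters : `∑_ε χ_ε(j) χ_ε(j') = 2^d ⬝ [j = j']` -/
lemma sum_chi_mul_chi (j j' : Fin d → Fin 2) :
    ∑ ε : Fin d → Bool, chi d ε j * chi d ε j' =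
      if j = j' then (2 : ℝ) ^ d else 0 := by
  unfold chi
  have : ∀ ε : Fin d → Bool,
      (∏ i, (if ε i then (if j i = 0 then (1 : ℝ) else -1) else 1)) *
        (∏ i, (if ε i then (if j' i = 0 then (1 : ℝ) else -1) else 1)) =
      ∏ i, ((if ε i then (if j i = 0 then (1 : ℝ) else -1) else 1) *
        (if ε i then (if j' i = 0 then (1 : ℝ) else -1) else 1)) := fun ε =>
    (Finset.prod_mul_distrib).symm
  have hps := Finset.prod_univ_sum (fun _ : Fin d => (Finset.univ : Finset Bool))
    (fun i b => ((if b then (if j i = 0 then (1 : ℝ) else -1) else 1) *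
      (if b then (if j' i = 0 then (1 : ℝ) else -1) else 1)))
  rw [Fintype.piFinset_univ] at hps
  rw [Finset.sum_congr rfl fun ε _ => this ε, ← hps]
  by_cases h : j = j'
  · subst h
    rw [if_pos rfl]
    have : ∀ i : Fin d, (∑ b : Bool,
        ((if b then (if j i = 0 then (1 : ℝ) else -1) else 1) *
         (if b then (if j i = 0 then (1 : ℝ) else -1) else 1))) = 2 := by
      intro i
      by_cases hj : j i = 0 <;> simp [hj, Fintype.sum_bool] <;> norm_num
    rw [Finset.prod_congr rfl fun i _ => this i, Finset.prod_const, Finset.card_univ,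
      Fintype.card_fin]
  · rw [if_neg h]
    obtain ⟨i₀, hi₀⟩ : ∃ i, j i ≠ j' i := by
      by_contra hc; push_neg at hc; exact h (funext hc)
    apply Finset.prod_eq_zero (Finset.mem_univ i₀)
    have : (j i₀ = 0 ∧ j' i₀ ≠ 0) ∨ (j i₀ ≠ 0 ∧ j' i₀ = 0) := by
      rcases Fin.exists_fin_two.mp ⟨j i₀, rfl⟩ with h1 | h1 <;>
        rcases Fin.exists_fin_two.mp ⟨j' i₀, rfl⟩ with h2 | h2 <;> omega
    rcases this with ⟨h1, h2⟩ | ⟨h1, h2⟩ <;> simp [h1, h2, Fintype.sum_bool]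

/-- `haarF` vanishes off `Qh` -/
lemma haarF_eq_zero {n : ℕ} {k : Fin d → ℕ} {ε : Fin d → Bool} {x : Euc d}
    (h : x ∉ Qh d n k) : haarF d n k ε x = 0 := if_neg h

/-- value of `haarF` on the child cube `j` -/
lemma haarF_eq_on_child {n : ℕ} {k : Fin d → ℕ} {ε : Fin d → Bool} {j : Fin d → Fin 2}
    {x : Euc d} (hx : x ∈ Qh d (n + 1) (fun i => 2 * k i + (j i : ℕ))) :
    haarF d n k ε x = (2 : ℝ) ^ (((n * d : ℕ) : ℝ) / 2) * chi d ε j := by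
  have hxk : x ∈ Qh d n k := Qh_child_subset n k j hx
  unfold haarF
  rw [if_pos (show ∀ i, (k i : ℝ) / 2 ^ n ≤ x i ∧ x i < ((k i : ℝ) + 1) / 2 ^ n from hxk)]
  congr 1
  unfold chi
  apply Finset.prod_congr rfl
  intro i _
  rcases Bool.dichotomy (ε i) with h | h
  · simp [h]
  · simp only [h, if_true]
    have h2 : (0:ℝ) < 2 ^ (n+1) := by positivity
    have e : (2:ℝ) ^ (n+1) = 2 * 2 ^ n := by ring
    obtain ⟨hl, hr⟩ := hx i
    have hl' : ((2 * k i + (j i : ℕ) : ℕ) : ℝ) / 2 ^ (n + 1) ≤ x i := hl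
    have hr' : x i < (((2 * k i + (j i : ℕ) : ℕ) : ℝ) + 1) / 2 ^ (n + 1) := hr
    have hv : (j i : ℕ) = 0 ∨ (j i : ℕ) = 1 := by have := (j i).isLt; omega
    rcases hv with h0 | h1
    · have hjfin : j i = 0 := Fin.ext (by simpa using h0)
      rw [if_pos hjfin]
      rw [if_pos ?_]
      rw [h0] at hr'
      push_cast at hr'
      rw [lt_div_iff₀ h2] at hr'
      nlinarith
    · have hjfin : ¬(j i = 0) := fun hc => by rw [hc] at h1; simp at h1
      rw [if_neg hjfin]
      rw [if_neg ?_]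
      rw [h1] at hl'
      push_cast at hl'
      rw [div_le_iff₀ h2] at hl'
      intro hc
      nlinarith

lemma abs_haarF_le {n : ℕ} (k : Fin d → ℕ) (ε : Fin d → Bool) (x : Euc d) :
    |haarF d n k ε x| ≤ (2 : ℝ) ^ (((n * d : ℕ) : ℝ) / 2) := by
  unfold haarF
  split_ifs with h
  · rw [abs_mul, abs_of_pos (Real.rpow_pos_of_pos two_pos _)]
    have : |∏ i, (if ε i then (if (2 : ℝ) ^ n * x i - (k i : ℝ) < 1 / 2 then (1:ℝ) else -1) else 1)| ≤ 1 := by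
      rw [Finset.abs_prod]
      apply Finset.prod_le_one (fun i _ => abs_nonneg _)
      intro i _
      rcases Bool.dichotomy (ε i) with h | h
      · simp [h]
      · simp only [h, if_true]
        split_ifs <;> norm_num
    nlinarith [Real.rpow_pos_of_pos (show (0:ℝ) < 2 by norm_num) (((n * d : ℕ) : ℝ) / 2)]
  · simp [Real.rpow_nonneg]

lemma measurable_coord (i : Fin d) : Measurable fun x : Euc d => x i := by
  have : (fun x : Euc d => x i) = fun x => ((MeasurableEquiv.toLp 2 (Fin d → ℝ)).symm x) i := rfl
  rw [this]
  exact (measurable_pi_apply i).comp ((MeasurableEquiv.toLp 2 (Fin d → ℝ)).symm).measurable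

lemma measurable_haarF (n : ℕ) (k : Fin d → ℕ) (ε : Fin d → Bool) :
    Measurable (haarF d n k ε) := by
  unfold haarF
  refine Measurable.ite (measurableSet_Qh n k) ?_ measurable_const
  apply Measurable.const_mul
  apply Finset.measurable_prod
  intro i _
  rcases Bool.dichotomy (ε i) with h | h
  · simp only [h, Bool.false_eq_true, if_false]; exact measurable_const
  · simp only [h, if_true]
    exact Measurable.ite
      (measurableSet_lt (((measurable_coord i).const_mul _).sub measurable_const)
        measurable_const) measurable_const measurable_const

end HaarAux

namespace HaarAux
variable {d : ℕ}

lemma children_disjoint (n : ℕ) (k : Fin d → ℕ) :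
    Pairwise (Function.onFun Disjoint
      fun j : Fin d → Fin 2 => Qh d (n + 1) (fun i => 2 * k i + (j i : ℕ))) := by
  intro j j' hjj
  rw [Function.onFun]
  rw [Set.disjoint_left]
  intro x hx hx'
  exact child_ne (k := k) (k' := k) (fun hc => hjj hc.2) (Qh_unique hx hx')

lemma integral_Qh_split (n : ℕ) (k : Fin d → ℕ) {h : Euc d → ℝ}
    (hh : IntegrableOn h (Qh d n k)) :
    ∫ x in Qh d n k, h x
      = ∑ j : Fin d → Fin 2, ∫ x in Qh d (n + 1) (fun i => 2 * k i + (j i : ℕ)), h x := by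
  rw [Qh_eq_union_children n k] at hh ⊢
  exact integral_iUnion_fintype (fun j => measurableSet_Qh _ _) (children_disjoint n k)
    (fun j => hh.mono_set
      (Set.subset_iUnion (fun j : Fin d → Fin 2 => Qh d (n + 1) fun i => 2 * k i + (j i : ℕ)) j))

def finPairEquiv (N : ℕ) : (Fin (2 ^ N) × Fin 2) ≃ Fin (2 ^ (N + 1)) where
  toFun p := ⟨2 * p.1 + p.2, by
    have h1 := p.1.isLt; have h2 := p.2.isLt
    have e : 2 ^ (N + 1) = 2 * 2 ^ N := by rw [pow_succ]; ring
    omega⟩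
  invFun c := (⟨c / 2, by
      have := c.isLt
      have e : 2 ^ (N + 1) = 2 * 2 ^ N := by rw [pow_succ]; ring
      omega⟩,
    ⟨c % 2, Nat.mod_lt _ two_pos⟩)
  left_inv p := by
    obtain ⟨a, b⟩ := p
    have hb := b.isLt
    simp only [Prod.mk.injEq]
    constructor
    · apply Fin.ext
      show (2 * (a : ℕ) + b) / 2 = (a : ℕ)
      omega
    · apply Fin.ext
      show (2 * (a : ℕ) + b) % 2 = (b : ℕ)
      omega
  right_inv c := by
    apply Fin.ext
    show 2 * ((c : ℕ) / 2) + (c : ℕ) % 2 = (c : ℕ)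
    omega

def childEquiv (d N : ℕ) : ((Fin d → Fin (2 ^ N)) × (Fin d → Fin 2)) ≃ (Fin d → Fin (2 ^ (N + 1))) :=
  (Equiv.arrowProdEquivProdArrow _ _ _).symm.trans (Equiv.piCongrRight fun _ => finPairEquiv N)

lemma childEquiv_val (N : ℕ) (k : Fin d → Fin (2 ^ N)) (j : Fin d → Fin 2) :
    (fun i => ((childEquiv d N (k, j)) i : ℕ)) = fun i => 2 * (k i : ℕ) + (j i : ℕ) := rfl

/-- reindex a sum over generation `N+1` indices as a double sum over parents and children -/
lemma sum_children (N : ℕ) (F : (Fin d → ℕ) → ℝ) :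
    ∑ k' : Fin d → Fin (2 ^ (N + 1)), F (fun i => (k' i : ℕ))
      = ∑ k : Fin d → Fin (2 ^ N), ∑ j : Fin d → Fin 2,
          F (fun i => 2 * (k i : ℕ) + (j i : ℕ)) := by
  rw [← Equiv.sum_comp (childEquiv d N) (fun k' => F (fun i => (k' i : ℕ))), Fintype.sum_prod_type]
  apply Finset.sum_congr rfl
  intro k _
  apply Finset.sum_congr rfl
  intro j _
  rw [childEquiv_val]

lemma integral_eq_sum_gen {h : Euc d → ℝ} (hh : IntegrableOn h (uCube d)) (N : ℕ) :
    ∫ x in Qh d 0 (fun _ => 0), h x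
      = ∑ k : Fin d → Fin (2 ^ N), ∫ x in Qh d N (fun i => (k i : ℕ)), h x := by
  induction N with
  | zero =>
    haveI : Unique (Fin (2 ^ 0)) :=
      ⟨⟨⟨0, by norm_num⟩⟩, fun a => by
        apply Fin.ext
        have := a.isLt
        simp only [pow_zero] at this
        omega⟩
    rw [Fintype.sum_unique]
    congr 1
    congr 1
    apply congrArg
    funext i
    have hlt := ((default : Fin d → Fin (2 ^ 0)) i).isLt
    simp only [pow_zero] at hlt
    omega
  | succ N ih =>
    rw [ih, sum_children N (fun k' => ∫ x in Qh d (N + 1) k', h x)]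
    apply Finset.sum_congr rfl
    intro k _
    exact integral_Qh_split N _ (hh.mono_set (Qh_subset_uCube fun i => (k i).isLt))

lemma integrableOn_mul_haar {f : Euc d → ℝ} {s : Set (Euc d)} (hf : IntegrableOn f s)
    (n : ℕ) (k : Fin d → ℕ) (ε : Fin d → Bool) :
    IntegrableOn (fun x => f x * haarF d n k ε x) s := by
  have := Integrable.bdd_mul (μ := volume.restrict s) (c := (2:ℝ) ^ (((n * d : ℕ) : ℝ) / 2))
    hf ((measurable_haarF n k ε).aestronglyMeasurable)
    (Filter.Eventually.of_forall fun x => by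
      simpa [Real.norm_eq_abs] using abs_haarF_le (n := n) k ε x)
  simpa [mul_comm, IntegrableOn] using this

lemma setIntegral_of_support_subset {A B : Set (Euc d)} (hB : MeasurableSet B) (hBA : B ⊆ A)
    (F : Euc d → ℝ) (h0 : ∀ x, x ∉ B → F x = 0) :
    ∫ x in A, F x = ∫ x in B, F x := by
  have hind : B.indicator F = F := Set.indicator_eq_self.2 (Function.support_subset_iff'.2 h0)
  rw [← hind, setIntegral_indicator hB, setIntegral_indicator hB,
    Set.inter_eq_self_of_subset_right hBA, Set.inter_self]

/-- Haar coefficient formula -/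
lemma integral_mul_haarF {f : Euc d → ℝ} (hf : IntegrableOn f (uCube d)) {n : ℕ}
    {k : Fin d → ℕ} (hk : ∀ i, k i < 2 ^ n) (ε : Fin d → Bool) :
    ∫ x in uCube d, f x * haarF d n k ε x
      = (2:ℝ) ^ (((n * d : ℕ) : ℝ) / 2) * ∑ j : Fin d → Fin 2,
          chi d ε j * ∫ x in Qh d (n + 1) (fun i => 2 * k i + (j i : ℕ)), f x := by
  have h1 : ∫ x in uCube d, f x * haarF d n k ε x = ∫ x in Qh d n k, f x * haarF d n k ε x :=
    setIntegral_of_support_subset (measurableSet_Qh n k) (Qh_subset_uCube hk) _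
      (fun x hx => by rw [haarF_eq_zero hx, mul_zero])
  rw [h1, integral_Qh_split n k (integrableOn_mul_haar (hf.mono_set (Qh_subset_uCube hk)) n k ε),
    Finset.mul_sum]
  apply Finset.sum_congr rfl
  intro j _
  rw [setIntegral_congr_fun (measurableSet_Qh _ _)
    (fun x hx => show f x * haarF d n k ε x
        = ((2:ℝ) ^ (((n * d : ℕ) : ℝ) / 2) * chi d ε j) * f x by
      rw [haarF_eq_on_child hx]; ring),
    integral_const_mul]
  ring

/-- integral of f over a cube equals the sum over children -/
lemma integral_Qh_add {f : Euc d → ℝ} (hf : IntegrableOn f (uCube d)) {n : ℕ}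
    {k : Fin d → ℕ} (hk : ∀ i, k i < 2 ^ n) :
    ∫ x in Qh d n k, f x
      = ∑ j : Fin d → Fin 2, ∫ x in Qh d (n + 1) (fun i => 2 * k i + (j i : ℕ)), f x :=
  integral_Qh_split n k (hf.mono_set (Qh_subset_uCube hk))

end HaarAux

namespace HaarAux
variable {d : ℕ}

/-- normalization constant of `haarF` -/
def Hn (d n : ℕ) : ℝ := (2:ℝ) ^ (((n * d : ℕ) : ℝ) / 2)

/-- renormalization factor in `bCoeff` -/
def cN (d : ℕ) (γ : ℝ) (n : ℕ) : ℝ := (2:ℝ) ^ (-((n * d : ℕ) : ℝ) * (γ - 1/2))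

/-- growth ratio -/
def rr (d : ℕ) (γ : ℝ) : ℝ := (2:ℝ) ^ ((d : ℝ) * (1 - γ))

lemma Hn_pos (n : ℕ) : 0 < Hn d n := Real.rpow_pos_of_pos two_pos _
lemma cN_pos (γ : ℝ) (n : ℕ) : 0 < cN d γ n := Real.rpow_pos_of_pos two_pos _
lemma rr_pos (γ : ℝ) : 0 < rr d γ := Real.rpow_pos_of_pos two_pos _

lemma dyVol_rpow (n : ℕ) : dyVol d n = (2:ℝ) ^ (-((n * d : ℕ) : ℝ)) := by
  rw [dyVol, ← Real.rpow_natCast 2 (n * d), ← Real.rpow_neg (by norm_num)]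

lemma R1 (γ : ℝ) (n : ℕ) : cN d γ n * Hn d n = rr d γ ^ n := by
  rw [cN, Hn, rr, ← Real.rpow_natCast ((2:ℝ) ^ ((d:ℝ) * (1 - γ))) n,
    ← Real.rpow_mul (by norm_num : (0:ℝ) ≤ 2), ← Real.rpow_add (by norm_num : (0:ℝ) < 2)]
  congr 1
  push_cast
  ring

lemma R2 (γ : ℝ) (m : ℕ) : dyVol d m ^ γ = (2:ℝ) ^ (-((m * d : ℕ) : ℝ) * γ) := by
  rw [dyVol_rpow, ← Real.rpow_mul (by norm_num : (0:ℝ) ≤ 2)]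

lemma R3 (γ : ℝ) (m : ℕ) : dyVol d m * rr d γ ^ m = (2:ℝ) ^ (-((m * d : ℕ) : ℝ) * γ) := by
  rw [dyVol_rpow, rr, ← Real.rpow_natCast ((2:ℝ) ^ ((d:ℝ) * (1 - γ))) m,
    ← Real.rpow_mul (by norm_num : (0:ℝ) ≤ 2), ← Real.rpow_add (by norm_num : (0:ℝ) < 2)]
  congr 1
  push_cast
  ring

lemma R4 (n : ℕ) : Hn d n * Hn d n = (2:ℝ) ^ (n * d) := by
  rw [Hn, ← Real.rpow_add (by norm_num : (0:ℝ) < 2), ← Real.rpow_natCast 2 (n * d)]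
  congr 1
  ring

lemma rr_gt_one (hd : 0 < d) {γ : ℝ} (hγ1 : γ < 1) : 1 < rr d γ := by
  rw [rr]
  apply Real.one_lt_rpow_iff_of_pos (by norm_num) |>.mpr
  left
  constructor
  · norm_num
  · have : (0:ℝ) < (d:ℝ) := by exact_mod_cast hd
    nlinarith

lemma geom_bound (hd : 0 < d) {γ : ℝ} (hγ1 : γ < 1) (m : ℕ) :
    ∑ n ∈ Finset.range m, rr d γ ^ n ≤ rr d γ ^ m / (rr d γ - 1) := by
  have hr := rr_gt_one hd hγ1
  rw [geom_sum_eq (ne_of_gt hr)]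
  apply div_le_div_of_nonneg_right ?_ (by linarith) |>.trans
  · exact le_refl _
  · linarith [pow_nonneg (le_of_lt (rr_pos (d := d) γ)) m]

/-- `haarF` is integrable on any dyadic cube -/
lemma integrableOn_haar (n : ℕ) (k : Fin d → ℕ) (ε : Fin d → Bool) (m : ℕ) (l : Fin d → ℕ) :
    IntegrableOn (haarF d n k ε) (Qh d m l) := by
  apply Integrable.mono' (g := fun _ => Hn d n)
  · refine (integrableOn_const_iff (C := Hn d n)).2 ?_
    right
    rw [volume_Qh]
    exact ENNReal.ofReal_lt_top
  · exact (measurable_haarF n k ε).aestronglyMeasurable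
  · exact Filter.Eventually.of_forall fun x => by
      simpa [Real.norm_eq_abs, Hn] using abs_haarF_le (n := n) k ε x

/-- integral of a Haar function over its own supporting cube vanishes -/
lemma integral_haar_self {n : ℕ} (k : Fin d → ℕ) {ε : Fin d → Bool}
    (hε : ε ≠ fun _ => false) :
    ∫ x in Qh d n k, haarF d n k ε x = 0 := by
  rw [integral_Qh_split n k (integrableOn_haar n k ε n k)]
  have : ∀ j : Fin d → Fin 2,
      ∫ x in Qh d (n + 1) (fun i => 2 * k i + (j i : ℕ)), haarF d n k ε x
        = Hn d n * chi d ε j * dyVol d (n + 1) := by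
    intro j
    have heq : Set.EqOn (haarF d n k ε) (fun _ => Hn d n * chi d ε j)
        (Qh d (n + 1) (fun i => 2 * k i + (j i : ℕ))) := fun x hx => by
      rw [haarF_eq_on_child hx, Hn]
    rw [setIntegral_congr_fun (measurableSet_Qh _ _) heq, setIntegral_const, measureReal_def, volume_Qh,
      ENNReal.toReal_ofReal (le_of_lt (dyVol_pos _)), smul_eq_mul]
    ring
  rw [Finset.sum_congr rfl fun j _ => this j, ← Finset.sum_mul, ← Finset.mul_sum,
    sum_chi_eq_zero hε]
  ring

/-- case `n ≥ m` : the integral of a Haar function of generation `n` over a cube of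
generation `m` vanishes -/
lemma integral_haar_over_coarser {n m : ℕ} (hmn : m ≤ n) {k l : Fin d → ℕ}
    {ε : Fin d → Bool} (hε : ε ≠ fun _ => false) :
    ∫ x in Qh d m l, haarF d n k ε x = 0 := by
  by_cases hx : ∃ x, x ∈ Qh d n k ∩ Qh d m l
  · obtain ⟨x, hx1, hx2⟩ := hx
    have hn : n = m + (n - m) := by omega
    have hanc : x ∈ Qh d m (fun i => k i / 2 ^ (n - m)) := by
      apply Qh_subset_anc m (n - m) k
      rwa [← hn]
    have hl : (fun i => k i / 2 ^ (n - m)) = l := Qh_unique hanc hx2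
    have hsub : Qh d n k ⊆ Qh d m l := by
      rw [← hl]
      intro y hy
      apply Qh_subset_anc m (n - m) k
      rwa [← hn]
    rw [setIntegral_of_support_subset (measurableSet_Qh n k) hsub _
      (fun y hy => haarF_eq_zero hy)]
    exact integral_haar_self k hε
  · push_neg at hx
    rw [setIntegral_congr_fun (measurableSet_Qh m l)
      (fun y hy => haarF_eq_zero (fun hc => hx y ⟨hc, hy⟩))]
    exact integral_zero _ _

/-- case `n < m`, wrong position : vanishing -/
lemma integral_haar_zero_of_ne {n m : ℕ} (hnm : n ≤ m) {k l : Fin d → ℕ}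
    (hne : (fun i => l i / 2 ^ (m - n)) ≠ k) (ε : Fin d → Bool) :
    ∫ x in Qh d m l, haarF d n k ε x = 0 := by
  rw [setIntegral_congr_fun (measurableSet_Qh m l) (fun y hy => haarF_eq_zero (fun hc => ?_))]
  · exact integral_zero _ _
  · have hm : m = n + (m - n) := by omega
    have hanc : y ∈ Qh d n (fun i => l i / 2 ^ (m - n)) := by
      apply Qh_subset_anc n (m - n) l
      rwa [← hm]
    exact hne (Qh_unique hanc hc)

/-- crude bound for the integral of a Haar function over any dyadic cube -/
lemma abs_integral_haar_le (n : ℕ) (k : Fin d → ℕ) (ε : Fin d → Bool) (m : ℕ) (l : Fin d → ℕ) :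
    |∫ x in Qh d m l, haarF d n k ε x| ≤ Hn d n * dyVol d m := by
  have := norm_setIntegral_le_of_norm_le_const (μ := volume) (s := Qh d m l)
    (C := Hn d n) (f := haarF d n k ε)
    (by rw [volume_Qh]; exact ENNReal.ofReal_lt_top)
    (fun x _ => by simpa [Real.norm_eq_abs, Hn] using abs_haarF_le (n := n) k ε x)
  rw [Real.norm_eq_abs, measureReal_def, volume_Qh, ENNReal.toReal_ofReal (le_of_lt (dyVol_pos _))] at this
  linarith

end HaarAux

namespace HaarAux
variable {d : ℕ}

lemma card_bool_fun : Fintype.card (Fin d → Bool) = 2 ^ d := by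
  rw [Fintype.card_fun, Fintype.card_bool, Fintype.card_fin]

/-- sum over shifted positions of generation `n ≤ m` Haar integrals over a fixed cube -/
lemma sum_over_k_bound {n m : ℕ} (hnm : n ≤ m) {l : Fin d → ℕ} (hl : ∀ i, l i < 2 ^ m)
    (ε : Fin d → Bool) :
    ∑ k : Fin d → Fin (2 ^ n), |∫ x in Qh d m l, haarF d n (fun i => (k i : ℕ)) ε x|
      ≤ Hn d n * dyVol d m := by
  have hm : m = n + (m - n) := by omega
  have hlt : ∀ i, l i / 2 ^ (m - n) < 2 ^ n := fun i => anc_lt (hm ▸ hl i)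
  set k₀ : Fin d → Fin (2 ^ n) := fun i => ⟨l i / 2 ^ (m - n), hlt i⟩ with hk₀
  calc ∑ k : Fin d → Fin (2 ^ n), |∫ x in Qh d m l, haarF d n (fun i => (k i : ℕ)) ε x|
      ≤ ∑ k : Fin d → Fin (2 ^ n), (if k = k₀ then Hn d n * dyVol d m else 0) := by
        apply Finset.sum_le_sum
        intro k _
        by_cases hk : k = k₀
        · rw [if_pos hk]
          exact abs_integral_haar_le n _ ε m l
        · rw [if_neg hk, integral_haar_zero_of_ne hnm ?_ ε, abs_zero]
          intro hc
          apply hk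
          funext i
          apply Fin.ext
          exact (congrFun hc i).symm
    _ = Hn d n * dyVol d m := by
        rw [Finset.sum_ite_eq' Finset.univ k₀]
        simp

/-- the (unsigned) triple sum bound for a fixed generation -/
lemma gen_sum_bound {γ : ℝ} (hd : 0 < d) {n m : ℕ} {l : Fin d → ℕ}
    (hl : ∀ i, l i < 2 ^ m) :
    ∑ k : Fin d → Fin (2 ^ n), ∑ ε ∈ Finset.univ.erase (fun _ : Fin d => false),
        cN d γ n * |∫ x in Qh d m l, haarF d n (fun i => (k i : ℕ)) ε x|
      ≤ if n < m then (2:ℝ) ^ d * (rr d γ ^ n * dyVol d m) else 0 := by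
  by_cases hnm : n < m
  · rw [if_pos hnm, Finset.sum_comm]
    calc ∑ ε ∈ Finset.univ.erase (fun _ : Fin d => false), ∑ k : Fin d → Fin (2 ^ n),
          cN d γ n * |∫ x in Qh d m l, haarF d n (fun i => (k i : ℕ)) ε x|
        ≤ ∑ ε ∈ Finset.univ.erase (fun _ : Fin d => false),
            cN d γ n * (Hn d n * dyVol d m) := by
          apply Finset.sum_le_sum
          intro ε _
          rw [← Finset.mul_sum]
          exact mul_le_mul_of_nonneg_left (sum_over_k_bound (le_of_lt hnm) hl ε)
            (le_of_lt (cN_pos γ n))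
      _ ≤ ∑ _ε : Fin d → Bool, cN d γ n * (Hn d n * dyVol d m) := by
          apply Finset.sum_le_sum_of_subset_of_nonneg (Finset.erase_subset _ _)
          intro ε _ _
          exact (mul_pos (cN_pos γ n) (mul_pos (Hn_pos n) (dyVol_pos m))).le
      _ = (2:ℝ) ^ d * (rr d γ ^ n * dyVol d m) := by
          rw [Finset.sum_const, Finset.card_univ, card_bool_fun, nsmul_eq_mul]
          push_cast
          rw [← R1 (d := d) γ n]
          ring
  · rw [if_neg hnm]
    have hmn : m ≤ n := by omega
    apply le_of_eq
    apply Finset.sum_eq_zero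
    intro k _
    apply Finset.sum_eq_zero
    intro ε hε
    rw [integral_haar_over_coarser hmn (Finset.ne_of_mem_erase hε), abs_zero, mul_zero]

/-- the dyadic test estimate for a finite combination of signed Haar functions -/
lemma signed_sum_test {γ : ℝ} (hd : 0 < d) (hγ1 : γ < 1) (N : ℕ)
    (σ : ∀ _ : ℕ, (Fin d → ℕ) → (Fin d → Bool) → ℝ) (hσ : ∀ n k ε, |σ n k ε| = 1)
    {m : ℕ} {l : Fin d → ℕ} (hl : ∀ i, l i < 2 ^ m) :
    |∫ x in Qh d m l, (∑ n ∈ Finset.range N, ∑ k : Fin d → Fin (2 ^ n),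
        ∑ ε ∈ Finset.univ.erase (fun _ : Fin d => false),
          σ n (fun i => (k i : ℕ)) ε * cN d γ n * haarF d n (fun i => (k i : ℕ)) ε x)|
      ≤ (2:ℝ) ^ d / (rr d γ - 1) * (2:ℝ) ^ (-((m * d : ℕ) : ℝ) * γ) := by
  have hint : ∀ (n : ℕ) (k : Fin d → Fin (2 ^ n)) (ε : Fin d → Bool),
      IntegrableOn (fun x => σ n (fun i => (k i : ℕ)) ε * cN d γ n
        * haarF d n (fun i => (k i : ℕ)) ε x) (Qh d m l) := by
    intro n k ε
    exact (integrableOn_haar n _ ε m l).const_mul _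
  rw [integral_finset_sum _ (fun n _ => integrable_finset_sum _
    (fun k _ => integrable_finset_sum _ (fun ε _ => hint n k ε)))]
  calc |∑ n ∈ Finset.range N, ∫ x in Qh d m l, ∑ k : Fin d → Fin (2 ^ n),
          ∑ ε ∈ Finset.univ.erase (fun _ : Fin d => false),
            σ n (fun i => (k i : ℕ)) ε * cN d γ n * haarF d n (fun i => (k i : ℕ)) ε x|
      ≤ ∑ n ∈ Finset.range N, |∫ x in Qh d m l, ∑ k : Fin d → Fin (2 ^ n),
          ∑ ε ∈ Finset.univ.erase (fun _ : Fin d => false),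
            σ n (fun i => (k i : ℕ)) ε * cN d γ n * haarF d n (fun i => (k i : ℕ)) ε x| :=
        Finset.abs_sum_le_sum_abs _ _
    _ ≤ ∑ n ∈ Finset.range N, (if n < m then (2:ℝ) ^ d * (rr d γ ^ n * dyVol d m) else 0) := by
        apply Finset.sum_le_sum
        intro n _
        rw [integral_finset_sum _ (fun k _ => integrable_finset_sum _ (fun ε _ => hint n k ε))]
        refine le_trans (Finset.abs_sum_le_sum_abs _ _) ?_
        refine le_trans ?_ (gen_sum_bound hd hl)
        apply Finset.sum_le_sum
        intro k _
        rw [integral_finset_sum _ (fun ε _ => hint n k ε)]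
        refine le_trans (Finset.abs_sum_le_sum_abs _ _) ?_
        apply Finset.sum_le_sum
        intro ε _
        rw [integral_const_mul, abs_mul, abs_mul, hσ, one_mul,
          abs_of_pos (cN_pos γ n)]
    _ ≤ ∑ n ∈ Finset.range m, (2:ℝ) ^ d * (rr d γ ^ n * dyVol d m) := by
        rw [← Finset.sum_filter]
        apply Finset.sum_le_sum_of_subset_of_nonneg
        · intro n hn
          rw [Finset.mem_filter] at hn
          exact Finset.mem_range.2 hn.2
        · intro n _ _
          exact (mul_pos (pow_pos two_pos d) (mul_pos (pow_pos (rr_pos γ) n) (dyVol_pos m))).le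
    _ = (2:ℝ) ^ d * dyVol d m * ∑ n ∈ Finset.range m, rr d γ ^ n := by
        rw [Finset.mul_sum]
        apply Finset.sum_congr rfl
        intro n _
        ring
    _ ≤ (2:ℝ) ^ d * dyVol d m * (rr d γ ^ m / (rr d γ - 1)) := by
        apply mul_le_mul_of_nonneg_left (geom_bound hd hγ1 m)
        exact (mul_pos (pow_pos two_pos d) (dyVol_pos m)).le
    _ = (2:ℝ) ^ d / (rr d γ - 1) * (dyVol d m * rr d γ ^ m) := by ring
    _ = (2:ℝ) ^ d / (rr d γ - 1) * (2:ℝ) ^ (-((m * d : ℕ) : ℝ) * γ) := by rw [R3]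

end HaarAux

namespace HaarAux
variable {d : ℕ} {α : ℝ}

lemma hatV_ge (f g : Euc d → ℝ) (hg1 : MemLp g ⊤ (volume.restrict (uCube d)))
    (hg2 : ∀ n (k : Fin d → ℕ), (∀ i, k i < 2 ^ n) →
      |∫ x in dyCube d n k, g x| ≤ dyVol d n ^ ((α + (d : ℝ) - 1) / d)) :
    ENNReal.ofReal (∫ x in uCube d, f x * g x) ≤ hatV d α f := by
  unfold hatV
  exact le_iSup_of_le g (le_iSup_of_le hg1 (le_iSup_of_le hg2 le_rfl))

lemma gamma_lt_one (hd : 0 < d) (hα1 : α < 1) : (α + (d : ℝ) - 1) / d < 1 := by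
  have hdp : (0:ℝ) < (d:ℝ) := by exact_mod_cast hd
  rw [div_lt_one hdp]
  linarith

lemma gamma_le_one (hd : 0 < d) (hα1 : α < 1) : (α + (d : ℝ) - 1) / d ≤ 1 :=
  le_of_lt (gamma_lt_one hd hα1)

/-- the constant-function lower estimate -/
lemma abs_integral_le_hatV (hd : 0 < d) (hα1 : α < 1) (f : Euc d → ℝ) :
    ENNReal.ofReal |∫ x in uCube d, f x| ≤ hatV d α f := by
  set c : ℝ := if 0 ≤ ∫ x in uCube d, f x then 1 else -1 with hc
  have habs : |c| = 1 := by rw [hc]; split_ifs <;> norm_num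
  have h1 : ENNReal.ofReal |∫ x in uCube d, f x|
      = ENNReal.ofReal (∫ x in uCube d, f x * c) := by
    congr 1
    rw [integral_mul_const]
    rw [hc]
    split_ifs with h
    · rw [mul_one, abs_of_nonneg h]
    · rw [abs_of_neg (lt_of_not_ge h)]; ring
  rw [h1]
  apply hatV_ge
  · exact memLp_top_of_bound aestronglyMeasurable_const 1
      (Filter.Eventually.of_forall fun x => by rw [Real.norm_eq_abs, habs])
  · intro n k hk
    rw [setIntegral_const, measureReal_def, volume_dyCube, ENNReal.toReal_ofReal (le_of_lt (dyVol_pos _)),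
      smul_eq_mul, abs_mul, habs, mul_one, abs_of_pos (dyVol_pos _)]
    calc dyVol d n = dyVol d n ^ (1:ℝ) := by rw [Real.rpow_one]
      _ ≤ dyVol d n ^ ((α + (d : ℝ) - 1) / d) := by
          apply Real.rpow_le_rpow_of_exponent_ge (dyVol_pos _) ?_ (gamma_le_one hd hα1)
          rw [dyVol]
          rw [inv_le_one_iff₀]
          right
          exact one_le_pow₀ (by norm_num)

/-- the sign of the Haar coefficient -/
def sg (d : ℕ) (f : Euc d → ℝ) (n : ℕ) (k : Fin d → ℕ) (ε : Fin d → Bool) : ℝ :=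
  if 0 ≤ ∫ x in uCube d, f x * haarF d n k ε x then 1 else -1

lemma abs_sg (f : Euc d → ℝ) (n : ℕ) (k : Fin d → ℕ) (ε : Fin d → Bool) :
    |sg d f n k ε| = 1 := by
  rw [sg]; split_ifs <;> norm_num

lemma sg_mul (f : Euc d → ℝ) (n : ℕ) (k : Fin d → ℕ) (ε : Fin d → Bool) :
    sg d f n k ε * ∫ x in uCube d, f x * haarF d n k ε x
      = |∫ x in uCube d, f x * haarF d n k ε x| := by
  rw [sg]
  split_ifs with h
  · rw [one_mul, abs_of_nonneg h]
  · rw [abs_of_neg (lt_of_not_ge h)]; ring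

/-- the big test function -/
def gBig (d : ℕ) (α : ℝ) (f : Euc d → ℝ) (N : ℕ) (x : Euc d) : ℝ :=
  ∑ n ∈ Finset.range N, ∑ k : Fin d → Fin (2 ^ n),
    ∑ ε ∈ Finset.univ.erase (fun _ : Fin d => false),
      sg d f n (fun i => (k i : ℕ)) ε * cN d ((α + (d : ℝ) - 1) / d) n *
        haarF d n (fun i => (k i : ℕ)) ε x

lemma gBig_measurable (f : Euc d → ℝ) (N : ℕ) : Measurable (gBig d α f N) := by
  apply Finset.measurable_sum
  intro n _
  apply Finset.measurable_sum
  intro k _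
  apply Finset.measurable_sum
  intro ε _
  exact (measurable_haarF n _ ε).const_mul _

lemma gBig_bound (f : Euc d → ℝ) (N : ℕ) (x : Euc d) :
    |gBig d α f N x| ≤ ∑ n ∈ Finset.range N, ∑ k : Fin d → Fin (2 ^ n),
      ∑ ε ∈ Finset.univ.erase (fun _ : Fin d => false),
        cN d ((α + (d : ℝ) - 1) / d) n * Hn d n := by
  refine le_trans (Finset.abs_sum_le_sum_abs _ _) (Finset.sum_le_sum fun n _ => ?_)
  refine le_trans (Finset.abs_sum_le_sum_abs _ _) (Finset.sum_le_sum fun k _ => ?_)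
  refine le_trans (Finset.abs_sum_le_sum_abs _ _) (Finset.sum_le_sum fun ε _ => ?_)
  rw [abs_mul, abs_mul, abs_sg, one_mul, abs_of_pos (cN_pos _ n)]
  exact mul_le_mul_of_nonneg_left
    (by simpa [Hn] using abs_haarF_le (n := n) (fun i => ((k i : ℕ))) ε x)
    (le_of_lt (cN_pos _ n))

/-- pairing of `f` with the big test function gives the partial sum of `|bCoeff|` -/
lemma integral_f_gBig (f : Euc d → ℝ) (hf : IntegrableOn f (uCube d)) (N : ℕ) :
    ∫ x in uCube d, f x * gBig d α f N x
      = ∑ n ∈ Finset.range N, ∑ k : Fin d → Fin (2 ^ n),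
          ∑ ε ∈ Finset.univ.erase (fun _ : Fin d => false),
            |bCoeff d α f n (fun i => (k i : ℕ)) ε| := by
  have hpt : ∀ x, f x * gBig d α f N x
      = ∑ n ∈ Finset.range N, ∑ k : Fin d → Fin (2 ^ n),
          ∑ ε ∈ Finset.univ.erase (fun _ : Fin d => false),
            (sg d f n (fun i => (k i : ℕ)) ε * cN d ((α + (d : ℝ) - 1) / d) n) *
              (f x * haarF d n (fun i => (k i : ℕ)) ε x) := by
    intro x
    rw [gBig, Finset.mul_sum]
    refine Finset.sum_congr rfl fun n _ => ?_
    rw [Finset.mul_sum]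
    refine Finset.sum_congr rfl fun k _ => ?_
    rw [Finset.mul_sum]
    refine Finset.sum_congr rfl fun ε _ => ?_
    ring
  have hint : ∀ (n : ℕ) (k : Fin d → Fin (2 ^ n)) (ε : Fin d → Bool),
      IntegrableOn (fun x => (sg d f n (fun i => (k i : ℕ)) ε * cN d ((α + (d : ℝ) - 1) / d) n) *
        (f x * haarF d n (fun i => (k i : ℕ)) ε x)) (uCube d) :=
    fun n k ε => (integrableOn_mul_haar hf n _ ε).const_mul _
  rw [setIntegral_congr_fun (measurableSet_uCube) (fun x _ => hpt x),
    integral_finset_sum _ (fun n _ => integrable_finset_sum _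
      (fun k _ => integrable_finset_sum _ (fun ε _ => hint n k ε)))]
  refine Finset.sum_congr rfl fun n _ => ?_
  rw [integral_finset_sum _ (fun k _ => integrable_finset_sum _ (fun ε _ => hint n k ε))]
  refine Finset.sum_congr rfl fun k _ => ?_
  rw [integral_finset_sum _ (fun ε _ => hint n k ε)]
  refine Finset.sum_congr rfl fun ε _ => ?_
  rw [integral_const_mul]
  have hb : bCoeff d α f n (fun i => (k i : ℕ)) ε
      = cN d ((α + (d : ℝ) - 1) / d) n *
          ∫ x in uCube d, f x * haarF d n (fun i => (k i : ℕ)) ε x := rfl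
  rw [hb, abs_mul, abs_of_pos (cN_pos _ n), ← sg_mul f n (fun i => (k i : ℕ)) ε]
  ring

/-- admissibility of the renormalized big test function, and the partial sum bound -/
lemma partial_sum_le (hd : 0 < d) (hα1 : α < 1) (f : Euc d → ℝ)
    (hf : IntegrableOn f (uCube d)) (N : ℕ) :
    ENNReal.ofReal (((2:ℝ) ^ d / (rr d ((α + (d : ℝ) - 1) / d) - 1))⁻¹ *
        ∑ n ∈ Finset.range N, ∑ k : Fin d → Fin (2 ^ n),
          ∑ ε ∈ Finset.univ.erase (fun _ : Fin d => false),
            |bCoeff d α f n (fun i => (k i : ℕ)) ε|)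
      ≤ hatV d α f := by
  set γ := (α + (d : ℝ) - 1) / d with hγ
  have hγ1 : γ < 1 := gamma_lt_one hd hα1
  set C₁ : ℝ := (2:ℝ) ^ d / (rr d γ - 1) with hC₁
  have hC₁pos : 0 < C₁ := by
    apply div_pos (pow_pos two_pos d)
    linarith [rr_gt_one hd hγ1]
  have hgi : ∫ x in uCube d, f x * (C₁⁻¹ * gBig d α f N x)
      = C₁⁻¹ * ∑ n ∈ Finset.range N, ∑ k : Fin d → Fin (2 ^ n),
          ∑ ε ∈ Finset.univ.erase (fun _ : Fin d => false),
            |bCoeff d α f n (fun i => (k i : ℕ)) ε| := by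
    rw [← integral_f_gBig f hf N, ← integral_const_mul]
    apply setIntegral_congr_fun measurableSet_uCube
    intro x _
    ring
  rw [← hgi]
  apply hatV_ge
  · apply memLp_top_of_bound ((gBig_measurable f N).const_mul _).aestronglyMeasurable
      (C₁⁻¹ * ∑ n ∈ Finset.range N, ∑ k : Fin d → Fin (2 ^ n),
        ∑ ε ∈ Finset.univ.erase (fun _ : Fin d => false), cN d γ n * Hn d n)
    apply Filter.Eventually.of_forall
    intro x
    rw [Real.norm_eq_abs, abs_mul, abs_of_pos (inv_pos.2 hC₁pos)]
    exact mul_le_mul_of_nonneg_left (gBig_bound f N x) (le_of_lt (inv_pos.2 hC₁pos))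
  · intro m l hl
    rw [← setIntegral_Qh_dyCube]
    have : ∫ x in Qh d m l, C₁⁻¹ * gBig d α f N x = C₁⁻¹ * ∫ x in Qh d m l, gBig d α f N x :=
      integral_const_mul _ _
    rw [this, abs_mul, abs_of_pos (inv_pos.2 hC₁pos)]
    have hb := signed_sum_test (γ := γ) hd hγ1 N (sg d f) (abs_sg f) hl
    calc C₁⁻¹ * |∫ x in Qh d m l, gBig d α f N x|
        ≤ C₁⁻¹ * (C₁ * (2:ℝ) ^ (-((m * d : ℕ) : ℝ) * γ)) := by
          apply mul_le_mul_of_nonneg_left ?_ (le_of_lt (inv_pos.2 hC₁pos))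
          exact hb
      _ = (2:ℝ) ^ (-((m * d : ℕ) : ℝ) * γ) := by
          field_simp
      _ = dyVol d m ^ γ := (R2 γ m).symm

end HaarAux

namespace HaarAux
variable {d : ℕ} {α : ℝ}

lemma upper_total (hd : 0 < d) (hα1 : α < 1) (f : Euc d → ℝ)
    (hf : IntegrableOn f (uCube d)) :
    ENNReal.ofReal |∫ x in uCube d, f x| +
        ∑' n : ℕ, ∑ k : Fin d → Fin (2 ^ n),
          ∑ ε ∈ Finset.univ.erase (fun _ : Fin d => false),
            ENNReal.ofReal |bCoeff d α f n (fun i => (k i : ℕ)) ε|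
      ≤ ENNReal.ofReal (1 + (2:ℝ) ^ d / (rr d ((α + (d : ℝ) - 1) / d) - 1)) * hatV d α f := by
  set γ := (α + (d : ℝ) - 1) / d with hγ
  set C₁ : ℝ := (2:ℝ) ^ d / (rr d γ - 1) with hC₁
  have hγ1 : γ < 1 := gamma_lt_one hd hα1
  have hC₁pos : 0 < C₁ := by
    apply div_pos (pow_pos two_pos d)
    linarith [rr_gt_one hd hγ1]
  have h2 : (∑' n : ℕ, ∑ k : Fin d → Fin (2 ^ n),
      ∑ ε ∈ Finset.univ.erase (fun _ : Fin d => false),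
        ENNReal.ofReal |bCoeff d α f n (fun i => (k i : ℕ)) ε|)
      ≤ ENNReal.ofReal C₁ * hatV d α f := by
    rw [ENNReal.tsum_eq_iSup_nat]
    apply iSup_le
    intro N
    set S : ℝ := ∑ n ∈ Finset.range N, ∑ k : Fin d → Fin (2 ^ n),
      ∑ ε ∈ Finset.univ.erase (fun _ : Fin d => false),
        |bCoeff d α f n (fun i => (k i : ℕ)) ε| with hS
    have hSnn : 0 ≤ S := by
      apply Finset.sum_nonneg
      intro n _
      apply Finset.sum_nonneg
      intro k _
      exact Finset.sum_nonneg fun ε _ => abs_nonneg _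
    have hofS : (∑ n ∈ Finset.range N, ∑ k : Fin d → Fin (2 ^ n),
        ∑ ε ∈ Finset.univ.erase (fun _ : Fin d => false),
          ENNReal.ofReal |bCoeff d α f n (fun i => (k i : ℕ)) ε|) = ENNReal.ofReal S := by
      rw [hS, ENNReal.ofReal_sum_of_nonneg (fun n _ => by
        apply Finset.sum_nonneg
        intro k _
        exact Finset.sum_nonneg fun ε _ => abs_nonneg _)]
      refine Finset.sum_congr rfl fun n _ => ?_
      rw [ENNReal.ofReal_sum_of_nonneg (fun k _ => Finset.sum_nonneg fun ε _ => abs_nonneg _)]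
      refine Finset.sum_congr rfl fun k _ => ?_
      rw [ENNReal.ofReal_sum_of_nonneg (fun ε _ => abs_nonneg _)]
    rw [hofS]
    have hle := partial_sum_le hd hα1 f hf N
    rw [← hC₁, ← hS] at hle
    calc ENNReal.ofReal S = ENNReal.ofReal (C₁ * (C₁⁻¹ * S)) := by
          rw [← mul_assoc, mul_inv_cancel₀ (ne_of_gt hC₁pos), one_mul]
      _ = ENNReal.ofReal C₁ * ENNReal.ofReal (C₁⁻¹ * S) :=
          ENNReal.ofReal_mul (le_of_lt hC₁pos)
      _ ≤ ENNReal.ofReal C₁ * hatV d α f := mul_le_mul_right hle _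
  calc ENNReal.ofReal |∫ x in uCube d, f x| +
        ∑' n : ℕ, ∑ k : Fin d → Fin (2 ^ n),
          ∑ ε ∈ Finset.univ.erase (fun _ : Fin d => false),
            ENNReal.ofReal |bCoeff d α f n (fun i => (k i : ℕ)) ε|
      ≤ hatV d α f + ENNReal.ofReal C₁ * hatV d α f :=
        add_le_add (abs_integral_le_hatV hd hα1 f) h2
    _ = (1 + ENNReal.ofReal C₁) * hatV d α f := by rw [add_mul, one_mul]
    _ = ENNReal.ofReal (1 + C₁) * hatV d α f := by
        rw [ENNReal.ofReal_add (by norm_num) (le_of_lt hC₁pos), ENNReal.ofReal_one]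

end HaarAux

namespace HaarAux
variable {d : ℕ}

lemma chi_false (j : Fin d → Fin 2) : chi d (fun _ => false) j = 1 := by
  unfold chi; simp

lemma pow_succ_mul (n : ℕ) : (2:ℝ) ^ ((n + 1) * d) = (2:ℝ) ^ (n * d) * 2 ^ d := by
  rw [add_mul, one_mul, pow_add]

/-- one-step Parseval identity on a dyadic cube -/
lemma parseval_cube {f g : Euc d → ℝ} (hf : IntegrableOn f (uCube d))
    (hg : IntegrableOn g (uCube d)) {n : ℕ} {k : Fin d → ℕ} (hk : ∀ i, k i < 2 ^ n) :
    ∑ j : Fin d → Fin 2, (2:ℝ) ^ ((n + 1) * d) *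
        (∫ x in Qh d (n + 1) (fun i => 2 * k i + (j i : ℕ)), f x) *
        (∫ x in Qh d (n + 1) (fun i => 2 * k i + (j i : ℕ)), g x)
      = (2:ℝ) ^ (n * d) * (∫ x in Qh d n k, f x) * (∫ x in Qh d n k, g x)
        + ∑ ε ∈ Finset.univ.erase (fun _ : Fin d => false),
            (∫ x in uCube d, f x * haarF d n k ε x) *
              (∫ x in uCube d, g x * haarF d n k ε x) := by
  set u : (Fin d → Fin 2) → ℝ :=
    fun j => ∫ x in Qh d (n + 1) (fun i => 2 * k i + (j i : ℕ)), f x with hu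
  set v : (Fin d → Fin 2) → ℝ :=
    fun j => ∫ x in Qh d (n + 1) (fun i => 2 * k i + (j i : ℕ)), g x with hv
  have hFf : ∀ ε, (∫ x in uCube d, f x * haarF d n k ε x)
      = Hn d n * ∑ j, chi d ε j * u j := fun ε => by
    rw [integral_mul_haarF hf hk ε]; rfl
  have hFg : ∀ ε, (∫ x in uCube d, g x * haarF d n k ε x)
      = Hn d n * ∑ j, chi d ε j * v j := fun ε => by
    rw [integral_mul_haarF hg hk ε]; rfl
  have key : ∑ ε : Fin d → Bool,
      (∫ x in uCube d, f x * haarF d n k ε x) * (∫ x in uCube d, g x * haarF d n k ε x)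
        = (2:ℝ) ^ ((n + 1) * d) * ∑ j, u j * v j := by
    calc ∑ ε : Fin d → Bool,
        (∫ x in uCube d, f x * haarF d n k ε x) * (∫ x in uCube d, g x * haarF d n k ε x)
        = ∑ ε : Fin d → Bool, (Hn d n * Hn d n) *
            ((∑ j, chi d ε j * u j) * (∑ j, chi d ε j * v j)) := by
          refine Finset.sum_congr rfl fun ε _ => ?_
          rw [hFf ε, hFg ε]; ring
      _ = (Hn d n * Hn d n) * ∑ ε : Fin d → Bool,
            ∑ j, ∑ j', (chi d ε j * chi d ε j') * (u j * v j') := by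
          rw [← Finset.mul_sum]
          congr 1
          refine Finset.sum_congr rfl fun ε _ => ?_
          rw [Finset.sum_mul_sum]
          refine Finset.sum_congr rfl fun j _ => ?_
          refine Finset.sum_congr rfl fun j' _ => ?_
          ring
      _ = (Hn d n * Hn d n) * ∑ j, ∑ j', (u j * v j') *
            (∑ ε : Fin d → Bool, chi d ε j * chi d ε j') := by
          congr 1
          rw [Finset.sum_comm]
          refine Finset.sum_congr rfl fun j _ => ?_
          rw [Finset.sum_comm]
          refine Finset.sum_congr rfl fun j' _ => ?_
          rw [Finset.mul_sum]
          refine Finset.sum_congr rfl fun ε _ => ?_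
          ring
      _ = (Hn d n * Hn d n) * ∑ j, (u j * v j) * (2:ℝ) ^ d := by
          congr 1
          refine Finset.sum_congr rfl fun j _ => ?_
          have : ∀ j' : Fin d → Fin 2, (u j * v j') *
              (∑ ε : Fin d → Bool, chi d ε j * chi d ε j')
                = if j = j' then (u j * v j') * (2:ℝ) ^ d else 0 := by
            intro j'
            rw [sum_chi_mul_chi]
            split_ifs with h
            · rfl
            · rw [mul_zero]
          rw [Finset.sum_congr rfl fun j' _ => this j', Finset.sum_ite_eq]
          simp
      _ = (2:ℝ) ^ ((n + 1) * d) * ∑ j, u j * v j := by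
          rw [R4, pow_succ_mul, ← Finset.sum_mul]
          ring
  have hsum_u : ∫ x in Qh d n k, f x = ∑ j, u j := integral_Qh_add hf hk
  have hsum_v : ∫ x in Qh d n k, g x = ∑ j, v j := integral_Qh_add hg hk
  have hzero : (∫ x in uCube d, f x * haarF d n k (fun _ => false) x) *
      (∫ x in uCube d, g x * haarF d n k (fun _ => false) x)
        = (2:ℝ) ^ (n * d) * (∫ x in Qh d n k, f x) * (∫ x in Qh d n k, g x) := by
    rw [hFf, hFg, hsum_u, hsum_v]
    have h1 : ∀ j, chi d (fun _ => false) j * u j = u j := fun j => by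
      rw [chi_false, one_mul]
    have h2 : ∀ j, chi d (fun _ => false) j * v j = v j := fun j => by
      rw [chi_false, one_mul]
    rw [Finset.sum_congr rfl fun j _ => h1 j, Finset.sum_congr rfl fun j _ => h2 j, ← R4]
    ring
  have herase : (∑ ε ∈ Finset.univ.erase (fun _ : Fin d => false),
        (∫ x in uCube d, f x * haarF d n k ε x) * (∫ x in uCube d, g x * haarF d n k ε x))
      + (∫ x in uCube d, f x * haarF d n k (fun _ => false) x) *
          (∫ x in uCube d, g x * haarF d n k (fun _ => false) x)
      = ∑ ε : Fin d → Bool, (∫ x in uCube d, f x * haarF d n k ε x) *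
          (∫ x in uCube d, g x * haarF d n k ε x) :=
    Finset.sum_erase_add _ _ (Finset.mem_univ _)
  have hlhs : ∑ j : Fin d → Fin 2, (2:ℝ) ^ ((n + 1) * d) * u j * v j
      = (2:ℝ) ^ ((n + 1) * d) * ∑ j, u j * v j := by
    rw [Finset.mul_sum]
    refine Finset.sum_congr rfl fun j _ => ?_
    ring
  show (∑ j : Fin d → Fin 2, (2:ℝ) ^ ((n + 1) * d) * u j * v j)
      = (2:ℝ) ^ (n * d) * (∫ x in Qh d n k, f x) * (∫ x in Qh d n k, g x)
        + ∑ ε ∈ Finset.univ.erase (fun _ : Fin d => false),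
            (∫ x in uCube d, f x * haarF d n k ε x) *
              (∫ x in uCube d, g x * haarF d n k ε x)
  rw [hlhs, ← key, ← herase, hzero]
  ring

end HaarAux

namespace HaarAux
variable {d : ℕ} {α : ℝ}

/-- the dyadic pairing sum at generation `N` -/
def Sq (d : ℕ) (f g : Euc d → ℝ) (N : ℕ) : ℝ :=
  ∑ k : Fin d → Fin (2 ^ N), (2:ℝ) ^ (N * d) * (∫ x in Qh d N (fun i => (k i : ℕ)), f x) *
    (∫ x in Qh d N (fun i => (k i : ℕ)), g x)

lemma Sq_succ {f g : Euc d → ℝ} (hf : IntegrableOn f (uCube d))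
    (hg : IntegrableOn g (uCube d)) (N : ℕ) :
    Sq d f g (N + 1) = Sq d f g N + ∑ k : Fin d → Fin (2 ^ N),
      ∑ ε ∈ Finset.univ.erase (fun _ : Fin d => false),
        (∫ x in uCube d, f x * haarF d N (fun i => (k i : ℕ)) ε x) *
          (∫ x in uCube d, g x * haarF d N (fun i => (k i : ℕ)) ε x) := by
  unfold Sq
  rw [sum_children N (fun k' => (2:ℝ) ^ ((N + 1) * d) * (∫ x in Qh d (N + 1) k', f x) *
    (∫ x in Qh d (N + 1) k', g x)), ← Finset.sum_add_distrib]
  refine Finset.sum_congr rfl fun k _ => ?_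
  exact parseval_cube hf hg (fun i => (k i).isLt)

lemma Sq_zero (f g : Euc d → ℝ) :
    Sq d f g 0 = (∫ x in uCube d, f x) * (∫ x in uCube d, g x) := by
  unfold Sq
  have hQ : ∀ k : Fin d → Fin (2 ^ 0), Qh d 0 (fun i => (k i : ℕ)) = Qh d 0 (fun _ => 0) := by
    intro k
    apply congrArg
    funext i
    have := (k i).isLt
    simp only [pow_zero] at this
    omega
  rw [Finset.sum_congr rfl fun k (_ : k ∈ Finset.univ) => by rw [hQ k]]
  rw [Finset.sum_const, Finset.card_univ, Fintype.card_fun, Fintype.card_fin, Fintype.card_fin]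
  norm_num
  rw [setIntegral_Qh_dyCube, setIntegral_Qh_dyCube]
  rfl

lemma Sq_telescope {f g : Euc d → ℝ} (hf : IntegrableOn f (uCube d))
    (hg : IntegrableOn g (uCube d)) (N : ℕ) :
    Sq d f g N = Sq d f g 0 + ∑ n ∈ Finset.range N, ∑ k : Fin d → Fin (2 ^ n),
      ∑ ε ∈ Finset.univ.erase (fun _ : Fin d => false),
        (∫ x in uCube d, f x * haarF d n (fun i => (k i : ℕ)) ε x) *
          (∫ x in uCube d, g x * haarF d n (fun i => (k i : ℕ)) ε x) := by
  induction N with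
  | zero => simp
  | succ N ih =>
    rw [Sq_succ hf hg N, ih, Finset.sum_range_succ]
    ring

lemma R5 {γ : ℝ} (n : ℕ) :
    (cN d γ n)⁻¹ * (Hn d n * dyVol d (n + 1) ^ γ) = (2:ℝ) ^ (-(d:ℝ) * γ) := by
  rw [cN, Hn, R2 γ (n + 1), ← Real.rpow_neg (by norm_num : (0:ℝ) ≤ 2),
    ← Real.rpow_add (by norm_num : (0:ℝ) < 2), ← Real.rpow_add (by norm_num : (0:ℝ) < 2)]
  congr 1
  push_cast
  ring

/-- pairing bound for one Haar coefficient against an admissible test function -/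
lemma FG_le (hd : 0 < d) (hα0 : 0 < α) {f g : Euc d → ℝ}
    (hg : IntegrableOn g (uCube d))
    (hgtest : ∀ n (k : Fin d → ℕ), (∀ i, k i < 2 ^ n) →
      |∫ x in dyCube d n k, g x| ≤ dyVol d n ^ ((α + (d : ℝ) - 1) / d))
    {n : ℕ} {k : Fin d → ℕ} (hk : ∀ i, k i < 2 ^ n) (ε : Fin d → Bool) :
    |(∫ x in uCube d, f x * haarF d n k ε x) * (∫ x in uCube d, g x * haarF d n k ε x)|
      ≤ (2:ℝ) ^ d * |bCoeff d α f n k ε| := by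
  set γ := (α + (d : ℝ) - 1) / d with hγ
  have hd1 : (1:ℝ) ≤ (d:ℝ) := by exact_mod_cast hd
  have hγ0 : 0 ≤ γ := by
    apply div_nonneg ?_ (by linarith)
    linarith
  have hG : |∫ x in uCube d, g x * haarF d n k ε x|
      ≤ Hn d n * ((2:ℝ) ^ d * dyVol d (n + 1) ^ γ) := by
    rw [integral_mul_haarF hg hk ε,
      show (2:ℝ) ^ (((n * d : ℕ) : ℝ) / 2) = Hn d n from rfl]
    rw [abs_mul, abs_of_pos (Hn_pos n)]
    apply mul_le_mul_of_nonneg_left ?_ (le_of_lt (Hn_pos n))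
    refine le_trans (Finset.abs_sum_le_sum_abs _ _) ?_
    have hterm : ∀ j : Fin d → Fin 2,
        |chi d ε j * ∫ x in Qh d (n + 1) (fun i => 2 * k i + (j i : ℕ)), g x|
          ≤ dyVol d (n + 1) ^ γ := by
      intro j
      rw [abs_mul]
      have h1 : |∫ x in Qh d (n + 1) (fun i => 2 * k i + (j i : ℕ)), g x|
          ≤ dyVol d (n + 1) ^ γ := by
        rw [setIntegral_Qh_dyCube]
        exact hgtest (n + 1) _ (fun i => by
          have := hk i
          have e : 2 ^ (n + 1) = 2 * 2 ^ n := by rw [pow_succ]; ring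
          have := (j i).isLt
          omega)
      calc |chi d ε j| * |∫ x in Qh d (n + 1) (fun i => 2 * k i + (j i : ℕ)), g x|
          ≤ 1 * |∫ x in Qh d (n + 1) (fun i => 2 * k i + (j i : ℕ)), g x| :=
            mul_le_mul_of_nonneg_right (abs_chi_le_one ε j) (abs_nonneg _)
        _ ≤ dyVol d (n + 1) ^ γ := by rw [one_mul]; exact h1
    calc ∑ j : Fin d → Fin 2,
          |chi d ε j * ∫ x in Qh d (n + 1) (fun i => 2 * k i + (j i : ℕ)), g x|
        ≤ ∑ _j : Fin d → Fin 2, dyVol d (n + 1) ^ γ := Finset.sum_le_sum fun j _ => hterm j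
      _ = (2:ℝ) ^ d * dyVol d (n + 1) ^ γ := by
          rw [Finset.sum_const, Finset.card_univ, nsmul_eq_mul]
          congr 1
          rw [Fintype.card_fun, Fintype.card_fin, Fintype.card_fin]
          push_cast
          ring
  have hb : bCoeff d α f n k ε = cN d γ n * ∫ x in uCube d, f x * haarF d n k ε x := rfl
  have hF : |∫ x in uCube d, f x * haarF d n k ε x| = (cN d γ n)⁻¹ * |bCoeff d α f n k ε| := by
    rw [hb, abs_mul, abs_of_pos (cN_pos γ n), ← mul_assoc,
      inv_mul_cancel₀ (ne_of_gt (cN_pos γ n)), one_mul]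
  rw [abs_mul, hF]
  calc (cN d γ n)⁻¹ * |bCoeff d α f n k ε| * |∫ x in uCube d, g x * haarF d n k ε x|
      ≤ (cN d γ n)⁻¹ * |bCoeff d α f n k ε| * (Hn d n * ((2:ℝ) ^ d * dyVol d (n + 1) ^ γ)) := by
        apply mul_le_mul_of_nonneg_left hG
        exact mul_nonneg (le_of_lt (inv_pos.2 (cN_pos γ n))) (abs_nonneg _)
    _ = ((2:ℝ) ^ d * |bCoeff d α f n k ε|) * ((cN d γ n)⁻¹ * (Hn d n * dyVol d (n + 1) ^ γ)) := by
        ring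
    _ = ((2:ℝ) ^ d * |bCoeff d α f n k ε|) * (2:ℝ) ^ (-(d:ℝ) * γ) := by rw [R5]
    _ ≤ ((2:ℝ) ^ d * |bCoeff d α f n k ε|) * 1 := by
        apply mul_le_mul_of_nonneg_left ?_ (by positivity)
        apply Real.rpow_le_one_of_one_le_of_nonpos (by norm_num)
        have : (0:ℝ) ≤ (d:ℝ) * γ := mul_nonneg (by linarith) hγ0
        linarith
    _ = (2:ℝ) ^ d * |bCoeff d α f n k ε| := mul_one _

/-- bound for the constant term -/
lemma Sq_zero_le {f g : Euc d → ℝ}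
    (hgtest : ∀ n (k : Fin d → ℕ), (∀ i, k i < 2 ^ n) →
      |∫ x in dyCube d n k, g x| ≤ dyVol d n ^ ((α + (d : ℝ) - 1) / d)) :
    |Sq d f g 0| ≤ |∫ x in uCube d, f x| := by
  rw [Sq_zero, abs_mul]
  have h1 : |∫ x in uCube d, g x| ≤ 1 := by
    have := hgtest 0 (fun _ => 0) (fun i => by norm_num)
    have hdv : dyVol d 0 = 1 := by rw [dyVol, Nat.zero_mul, pow_zero, inv_one]
    rw [hdv, Real.one_rpow] at this
    exact this
  calc |∫ x in uCube d, f x| * |∫ x in uCube d, g x| ≤ |∫ x in uCube d, f x| * 1 :=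
        mul_le_mul_of_nonneg_left h1 (abs_nonneg _)
    _ = |∫ x in uCube d, f x| := mul_one _

end HaarAux

namespace HaarAux
variable {d : ℕ}

lemma dist_le_of_mem_Qh {N : ℕ} {k : Fin d → ℕ} {x y : Euc d} (hx : x ∈ Qh d N k)
    (hy : y ∈ Qh d N k) : dist x y ≤ Real.sqrt d * ((2:ℝ) ^ N)⁻¹ := by
  rw [EuclideanSpace.dist_eq]
  have hco : ∀ i, dist (x i) (y i) ^ 2 ≤ (((2:ℝ) ^ N)⁻¹) ^ 2 := by
    intro i
    obtain ⟨hx1, hx2⟩ := hx i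
    obtain ⟨hy1, hy2⟩ := hy i
    have h2 : (0:ℝ) < 2 ^ N := by positivity
    have he : ((k i : ℝ) + 1) / 2 ^ N - (k i : ℝ) / 2 ^ N = ((2:ℝ) ^ N)⁻¹ := by
      field_simp
      ring
    have habs : |x i - y i| ≤ ((2:ℝ) ^ N)⁻¹ := by
      rw [abs_sub_le_iff]
      constructor <;> linarith
    rw [Real.dist_eq]
    calc |x i - y i| ^ 2 = |x i - y i| * |x i - y i| := sq (|x i - y i|) ▸ by ring
      _ ≤ ((2:ℝ) ^ N)⁻¹ * ((2:ℝ) ^ N)⁻¹ := by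
          apply mul_le_mul habs habs (abs_nonneg _) (by positivity)
      _ = (((2:ℝ) ^ N)⁻¹) ^ 2 := by ring
  calc Real.sqrt (∑ i, dist (x i) (y i) ^ 2)
      ≤ Real.sqrt (∑ _i : Fin d, (((2:ℝ) ^ N)⁻¹) ^ 2) :=
        Real.sqrt_le_sqrt (Finset.sum_le_sum fun i _ => hco i)
    _ = Real.sqrt ((d : ℝ) * (((2:ℝ) ^ N)⁻¹) ^ 2) := by
        rw [Finset.sum_const, Finset.card_univ, Fintype.card_fin, nsmul_eq_mul]
    _ = Real.sqrt d * ((2:ℝ) ^ N)⁻¹ := by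
        rw [Real.sqrt_mul (Nat.cast_nonneg d), Real.sqrt_sq (by positivity)]

/-- mean oscillation sum at generation `N` -/
def DN (d : ℕ) (f : Euc d → ℝ) (N : ℕ) : ℝ :=
  ∑ k : Fin d → Fin (2 ^ N), ∫ x in Qh d N (fun i => (k i : ℕ)),
    |f x - (2:ℝ) ^ (N * d) * ∫ y in Qh d N (fun i => (k i : ℕ)), f y|

lemma integrableOn_dev {f : Euc d → ℝ} {s : Set (Euc d)} (hf : IntegrableOn f s)
    (hs : volume s < ⊤) (c : ℝ) :
    IntegrableOn (fun x => |f x - c|) s :=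
  (hf.sub (integrableOn_const hs.ne)).abs

lemma volume_Qh_lt_top (N : ℕ) (k : Fin d → ℕ) : volume (Qh d N k) < ⊤ := by
  rw [volume_Qh]
  exact ENNReal.ofReal_lt_top

lemma DN_nonneg (f : Euc d → ℝ) (N : ℕ) : 0 ≤ DN d f N :=
  Finset.sum_nonneg fun k _ => integral_nonneg fun x => abs_nonneg _

end HaarAux

namespace HaarAux
variable {d : ℕ}

lemma DN_le_add {f φ : Euc d → ℝ} (hf : IntegrableOn f (uCube d))
    (hφ : IntegrableOn φ (uCube d)) (N : ℕ) :
    DN d f N ≤ DN d (fun x => f x - φ x) N + DN d φ N := by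
  unfold DN
  rw [← Finset.sum_add_distrib]
  apply Finset.sum_le_sum
  intro k _
  set Q := Qh d N (fun i => (k i : ℕ)) with hQdef
  have hQU : Q ⊆ uCube d := Qh_subset_uCube fun i => (k i).isLt
  have hfQ : IntegrableOn f Q := hf.mono_set hQU
  have hφQ : IntegrableOn φ Q := hφ.mono_set hQU
  have hsub : ∫ x in Q, (f x - φ x) = (∫ x in Q, f x) - ∫ x in Q, φ x :=
    integral_sub hfQ hφQ
  have hpt : ∀ x, |f x - (2:ℝ) ^ (N * d) * ∫ y in Q, f y|
      ≤ |(f x - φ x) - (2:ℝ) ^ (N * d) * ∫ y in Q, (f y - φ y)|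
        + |φ x - (2:ℝ) ^ (N * d) * ∫ y in Q, φ y| := by
    intro x
    have : f x - (2:ℝ) ^ (N * d) * ∫ y in Q, f y
        = ((f x - φ x) - (2:ℝ) ^ (N * d) * ∫ y in Q, (f y - φ y))
          + (φ x - (2:ℝ) ^ (N * d) * ∫ y in Q, φ y) := by
      rw [hsub]; ring
    rw [this]
    exact abs_add_le _ _
  calc ∫ x in Q, |f x - (2:ℝ) ^ (N * d) * ∫ y in Q, f y|
      ≤ ∫ x in Q, (|(f x - φ x) - (2:ℝ) ^ (N * d) * ∫ y in Q, (f y - φ y)|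
          + |φ x - (2:ℝ) ^ (N * d) * ∫ y in Q, φ y|) := by
        apply integral_mono (integrableOn_dev hfQ (volume_Qh_lt_top _ _) _)
          (((integrableOn_dev (hfQ.sub hφQ) (volume_Qh_lt_top _ _) _)).add
            (integrableOn_dev hφQ (volume_Qh_lt_top _ _) _))
        intro x
        exact hpt x
    _ = _ := integral_add (integrableOn_dev (hfQ.sub hφQ) (volume_Qh_lt_top _ _) _)
          (integrableOn_dev hφQ (volume_Qh_lt_top _ _) _)

lemma DN_le_two {f : Euc d → ℝ} (hf : IntegrableOn f (uCube d)) (N : ℕ) :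
    DN d f N ≤ 2 * ∫ x in Qh d 0 (fun _ => 0), |f x| := by
  have habs : IntegrableOn (fun x => |f x|) (uCube d) := hf.abs
  rw [integral_eq_sum_gen habs N, Finset.mul_sum]
  unfold DN
  apply Finset.sum_le_sum
  intro k _
  set Q := Qh d N (fun i => (k i : ℕ)) with hQdef
  have hQU : Q ⊆ uCube d := Qh_subset_uCube fun i => (k i).isLt
  have hfQ : IntegrableOn f Q := hf.mono_set hQU
  set c : ℝ := (2:ℝ) ^ (N * d) * ∫ y in Q, f y with hc
  have hvol : volume.real Q = dyVol d N := by
    rw [measureReal_def, volume_Qh, ENNReal.toReal_ofReal (le_of_lt (dyVol_pos _))]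
  have hcvol : |c| * dyVol d N ≤ ∫ x in Q, |f x| := by
    rw [hc, abs_mul, abs_of_pos (show (0:ℝ) < (2:ℝ)^(N*d) by positivity)]
    have h1 : |∫ y in Q, f y| ≤ ∫ y in Q, |f y| := by
      simpa [Real.norm_eq_abs] using norm_integral_le_integral_norm (μ := volume.restrict Q) f
    have h2 : (2:ℝ) ^ (N * d) * dyVol d N = 1 := by
      rw [dyVol]
      field_simp
    calc (2:ℝ) ^ (N * d) * |∫ y in Q, f y| * dyVol d N
        = ((2:ℝ) ^ (N * d) * dyVol d N) * |∫ y in Q, f y| := by ring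
      _ = |∫ y in Q, f y| := by rw [h2, one_mul]
      _ ≤ ∫ y in Q, |f y| := h1
  calc ∫ x in Q, |f x - c|
      ≤ ∫ x in Q, (|f x| + |c|) := by
        apply integral_mono (integrableOn_dev hfQ (volume_Qh_lt_top _ _) _)
          (hfQ.abs.add (integrableOn_const (volume_Qh_lt_top _ _).ne))
        intro x
        exact abs_sub _ _
    _ = (∫ x in Q, |f x|) + |c| * dyVol d N := by
        rw [integral_add hfQ.abs (integrableOn_const (volume_Qh_lt_top _ _).ne),
          setIntegral_const, smul_eq_mul, hvol, mul_comm]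
    _ ≤ (∫ x in Q, |f x|) + ∫ x in Q, |f x| := by linarith
    _ = 2 * ∫ x in Q, |f x| := by ring

lemma DN_phi_le {φ : Euc d → ℝ} (hφ : IntegrableOn φ (uCube d)) (hφc : Continuous φ) {N : ℕ} {η : ℝ}
    (hη : 0 ≤ η)
    (hmod : ∀ x y : Euc d, dist x y ≤ Real.sqrt d * ((2:ℝ) ^ N)⁻¹ → |φ x - φ y| ≤ η) :
    DN d φ N ≤ η := by
  unfold DN
  have hcard : ∀ k : Fin d → Fin (2 ^ N), True := fun _ => trivial
  have key : ∀ k : Fin d → Fin (2 ^ N), ∫ x in Qh d N (fun i => (k i : ℕ)),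
      |φ x - (2:ℝ) ^ (N * d) * ∫ y in Qh d N (fun i => (k i : ℕ)), φ y| ≤ η * dyVol d N := by
    intro k
    set Q := Qh d N (fun i => (k i : ℕ)) with hQdef
    have hQU : Q ⊆ uCube d := Qh_subset_uCube fun i => (k i).isLt
    have hφQ : IntegrableOn φ Q := hφ.mono_set hQU
    have hvol : volume.real Q = dyVol d N := by
      rw [measureReal_def, volume_Qh, ENNReal.toReal_ofReal (le_of_lt (dyVol_pos _))]
    have hpt : ∀ x ∈ Q, |φ x - (2:ℝ) ^ (N * d) * ∫ y in Q, φ y| ≤ η := by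
      intro x hx
      have hconst : ∫ _y in Q, φ x = dyVol d N * φ x := by
        rw [setIntegral_const, smul_eq_mul, hvol]
      have hdiff : φ x - (2:ℝ) ^ (N * d) * ∫ y in Q, φ y
          = (2:ℝ) ^ (N * d) * ∫ y in Q, (φ x - φ y) := by
        rw [integral_sub (integrableOn_const (C := φ x) (volume_Qh_lt_top _ _).ne) hφQ, hconst]
        have h2 : (2:ℝ) ^ (N * d) * dyVol d N = 1 := by
          rw [dyVol]; field_simp
        have : (2:ℝ) ^ (N * d) * (dyVol d N * φ x) = φ x := by
          rw [← mul_assoc, h2, one_mul]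
        rw [mul_sub, this]
      rw [hdiff, abs_mul, abs_of_pos (show (0:ℝ) < (2:ℝ)^(N*d) by positivity)]
      have hbd : |∫ y in Q, (φ x - φ y)| ≤ η * dyVol d N := by
        have := norm_setIntegral_le_of_norm_le_const (μ := volume) (s := Q)
          (C := η) (f := fun y => φ x - φ y) (volume_Qh_lt_top _ _)
          (fun y hy => by
            rw [Real.norm_eq_abs]
            exact hmod x y (dist_le_of_mem_Qh hx hy))
        rw [Real.norm_eq_abs, hvol] at this
        exact this
      have h2 : (2:ℝ) ^ (N * d) * dyVol d N = 1 := by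
        rw [dyVol]; field_simp
      calc (2:ℝ) ^ (N * d) * |∫ y in Q, (φ x - φ y)|
          ≤ (2:ℝ) ^ (N * d) * (η * dyVol d N) := by
            apply mul_le_mul_of_nonneg_left hbd (by positivity)
        _ = η * ((2:ℝ) ^ (N * d) * dyVol d N) := by ring
        _ = η := by rw [h2, mul_one]
    calc ∫ x in Q, |φ x - (2:ℝ) ^ (N * d) * ∫ y in Q, φ y|
        ≤ ∫ _x in Q, η := by
          apply integral_mono_ae (integrableOn_dev hφQ (volume_Qh_lt_top _ _) _)
            (integrableOn_const (volume_Qh_lt_top _ _).ne)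
          exact (ae_restrict_iff' (measurableSet_Qh _ _)).2 (Filter.Eventually.of_forall hpt)
      _ = η * dyVol d N := by rw [setIntegral_const, smul_eq_mul, hvol, mul_comm]
  calc ∑ k : Fin d → Fin (2 ^ N), ∫ x in Qh d N (fun i => (k i : ℕ)),
        |φ x - (2:ℝ) ^ (N * d) * ∫ y in Qh d N (fun i => (k i : ℕ)), φ y|
      ≤ ∑ _k : Fin d → Fin (2 ^ N), η * dyVol d N := Finset.sum_le_sum fun k _ => key k
    _ = η := by
        rw [Finset.sum_const, Finset.card_univ, Fintype.card_fun, Fintype.card_fin,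
          Fintype.card_fin, nsmul_eq_mul, dyVol]
        push_cast
        rw [← pow_mul]
        field_simp

end HaarAux

namespace HaarAux
variable {d : ℕ}

lemma DN_to_zero {f : Euc d → ℝ} (hf : IntegrableOn f (uCube d)) :
    ∀ ε > 0, ∃ N₀ : ℕ, ∀ N ≥ N₀, DN d f N ≤ ε := by
  intro ε hε
  set f' := (uCube d).indicator f with hf'def
  have hf' : Integrable f' volume := hf.integrable_indicator measurableSet_uCube
  obtain ⟨φ, hφsupp, hφnear, hφcont, hφint⟩ :=
    hf'.exists_hasCompactSupport_integral_sub_le (show (0:ℝ) < ε/4 by linarith)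
  simp only [Real.norm_eq_abs] at hφnear
  have hφU : IntegrableOn φ (uCube d) := hφint.integrableOn
  have hfφ : ∫ x in Qh d 0 (fun _ => 0), |f x - φ x| ≤ ε / 4 := by
    have h1 : ∫ x in Qh d 0 (fun _ => 0), |f x - φ x|
        = ∫ x in Qh d 0 (fun _ => 0), |f' x - φ x| := by
      apply setIntegral_congr_fun (measurableSet_Qh _ _)
      intro x hx
      show |f x - φ x| = |(uCube d).indicator f x - φ x|
      rw [Set.indicator_of_mem (Qh_subset_uCube (fun i => by norm_num) hx)]
    have h2 : ∫ x in Qh d 0 (fun _ => 0), |f' x - φ x| ≤ ∫ x, |f' x - φ x| :=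
      setIntegral_le_integral (hf'.sub hφint).abs
        (Filter.Eventually.of_forall fun x => abs_nonneg _)
    linarith
  have huc : UniformContinuous φ := hφsupp.uniformContinuous_of_continuous hφcont
  obtain ⟨δ, hδ, hst⟩ := Metric.uniformContinuous_iff.mp huc (ε/4) (by linarith)
  obtain ⟨N₀, hN₀⟩ := pow_unbounded_of_one_lt ((Real.sqrt d + 1) / δ) (one_lt_two (α := ℝ))
  refine ⟨N₀, fun N hN => ?_⟩
  have h2N : ((Real.sqrt d + 1) / δ) < 2 ^ N := by
    calc ((Real.sqrt d + 1) / δ) < 2 ^ N₀ := hN₀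
      _ ≤ 2 ^ N := by
        apply pow_le_pow_right₀ (by norm_num) hN
  have hmod : ∀ x y : Euc d, dist x y ≤ Real.sqrt d * ((2:ℝ) ^ N)⁻¹ → |φ x - φ y| ≤ ε/4 := by
    intro x y hxy
    have h2Npos : (0:ℝ) < 2 ^ N := by positivity
    have hs : (0:ℝ) ≤ Real.sqrt d := Real.sqrt_nonneg _
    have h3 : Real.sqrt d + 1 < 2 ^ N * δ := by
      rw [div_lt_iff₀ hδ] at h2N
      linarith
    have h4 : Real.sqrt d * ((2:ℝ) ^ N)⁻¹ < δ := by
      rw [mul_inv_lt_iff₀ h2Npos]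
      linarith
    have := hst (show dist x y < δ by linarith)
    rw [Real.dist_eq] at this
    linarith
  have hDφ : DN d φ N ≤ ε/4 := DN_phi_le hφU hφcont (by linarith) hmod
  have hsubInt : IntegrableOn (fun x => f x - φ x) (uCube d) := hf.sub hφU
  have hDfφ : DN d (fun x => f x - φ x) N ≤ 2 * (ε/4) := by
    refine le_trans (DN_le_two hsubInt N) ?_
    linarith
  have := DN_le_add hf hφU N
  linarith

end HaarAux

namespace HaarAux
variable {d : ℕ} {α : ℝ}

lemma Sq_diff_le {f g : Euc d → ℝ} (hf : IntegrableOn f (uCube d))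
    (hgm : AEStronglyMeasurable g (volume.restrict (uCube d))) {M : ℝ} (hM0 : 0 ≤ M)
    (hM : ∀ᵐ x ∂(volume.restrict (uCube d)), |g x| ≤ M) (N : ℕ) :
    |(∫ x in uCube d, f x * g x) - Sq d f g N| ≤ M * DN d f N := by
  have hgU : IntegrableOn g (uCube d) := by
    apply Integrable.mono' ((integrableOn_const_iff (C := M)).2 (Or.inr (by
      rw [volume_uCube]; exact ENNReal.one_lt_top))) hgm
    exact hM.mono fun x hx => by rwa [Real.norm_eq_abs]
  have hfg : IntegrableOn (fun x => f x * g x) (uCube d) := by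
    have := Integrable.bdd_mul (c := M) hf hgm (hM.mono fun x hx => by rwa [Real.norm_eq_abs])
    simpa [mul_comm, IntegrableOn] using this
  have hU0 : ∫ x in uCube d, f x * g x = ∫ x in Qh d 0 (fun _ => 0), f x * g x :=
    (setIntegral_Qh_dyCube 0 (fun _ => 0) _).symm
  rw [hU0, integral_eq_sum_gen hfg N]
  have hSq : Sq d f g N = ∑ k : Fin d → Fin (2 ^ N),
      ∫ x in Qh d N (fun i => (k i : ℕ)),
        ((2:ℝ) ^ (N * d) * ∫ y in Qh d N (fun i => (k i : ℕ)), f y) * g x := by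
    unfold Sq
    refine Finset.sum_congr rfl fun k _ => ?_
    rw [show (fun x => ((2:ℝ) ^ (N * d) * ∫ y in Qh d N (fun i => (k i : ℕ)), f y) * g x)
        = fun x => ((2:ℝ) ^ (N * d) * ∫ y in Qh d N (fun i => (k i : ℕ)), f y) * g x from rfl,
      integral_const_mul]
  rw [hSq, ← Finset.sum_sub_distrib]
  refine le_trans (Finset.abs_sum_le_sum_abs _ _) ?_
  have hterm : ∀ k : Fin d → Fin (2 ^ N),
      |(∫ x in Qh d N (fun i => (k i : ℕ)), f x * g x)
        - ∫ x in Qh d N (fun i => (k i : ℕ)),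
            ((2:ℝ) ^ (N * d) * ∫ y in Qh d N (fun i => (k i : ℕ)), f y) * g x|
        ≤ M * ∫ x in Qh d N (fun i => (k i : ℕ)),
            |f x - (2:ℝ) ^ (N * d) * ∫ y in Qh d N (fun i => (k i : ℕ)), f y| := by
    intro k
    set Q := Qh d N (fun i => (k i : ℕ)) with hQdef
    have hQU : Q ⊆ uCube d := Qh_subset_uCube fun i => (k i).isLt
    set c : ℝ := (2:ℝ) ^ (N * d) * ∫ y in Q, f y with hc
    have hfgQ : IntegrableOn (fun x => f x * g x) Q := hfg.mono_set hQU
    have hgQ : IntegrableOn g Q := hgU.mono_set hQU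
    have hfQ : IntegrableOn f Q := hf.mono_set hQU
    have hMQ : ∀ᵐ x ∂(volume.restrict Q), |g x| ≤ M :=
      ae_restrict_of_ae_restrict_of_subset hQU hM
    have hgmQ : AEStronglyMeasurable g (volume.restrict Q) :=
      hgm.mono_measure (Measure.restrict_mono hQU le_rfl)
    have hdiff : (∫ x in Q, f x * g x) - ∫ x in Q, c * g x
        = ∫ x in Q, (f x - c) * g x := by
      rw [← integral_sub hfgQ (hgQ.const_mul c)]
      refine integral_congr_ae (Filter.Eventually.of_forall fun x => ?_)
      ring
    rw [hdiff]
    have hfc : IntegrableOn (fun x => f x - c) Q :=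
      hfQ.sub ((integrableOn_const_iff (C := c)).2 (Or.inr (volume_Qh_lt_top _ _)))
    have hprodInt : IntegrableOn (fun x => (f x - c) * g x) Q := by
      have := Integrable.bdd_mul (c := M) hfc hgmQ
        (hMQ.mono fun x hx => by rwa [Real.norm_eq_abs])
      simpa [mul_comm, IntegrableOn] using this
    calc |∫ x in Q, (f x - c) * g x| ≤ ∫ x in Q, |f x - c| * |g x| := by
          simpa [Real.norm_eq_abs, abs_mul] using
            norm_integral_le_integral_norm (μ := volume.restrict Q) (fun x => (f x - c) * g x)
      _ ≤ ∫ x in Q, |f x - c| * M := by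
          apply integral_mono_ae
            (hprodInt.abs.congr (Filter.Eventually.of_forall fun x => abs_mul _ _))
            ((integrableOn_dev hfQ (volume_Qh_lt_top _ _) c).mul_const M)
          refine hMQ.mono fun x hx => ?_
          show |f x - c| * |g x| ≤ |f x - c| * M
          exact mul_le_mul_of_nonneg_left hx (abs_nonneg _)
      _ = M * ∫ x in Q, |f x - c| := by rw [integral_mul_const]; ring
  refine le_trans (Finset.sum_le_sum fun k _ => hterm k) ?_
  rw [DN, Finset.mul_sum]

lemma lower_total (hd : 0 < d) (hα0 : 0 < α) (hα1 : α < 1) (f : Euc d → ℝ)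
    (hf : IntegrableOn f (uCube d)) :
    hatV d α f ≤ ENNReal.ofReal ((2:ℝ) ^ d) *
      (ENNReal.ofReal |∫ x in uCube d, f x| +
        ∑' n : ℕ, ∑ k : Fin d → Fin (2 ^ n),
          ∑ ε ∈ Finset.univ.erase (fun _ : Fin d => false),
            ENNReal.ofReal |bCoeff d α f n (fun i => (k i : ℕ)) ε|) := by
  unfold hatV
  refine iSup_le fun g => iSup_le fun hg1 => iSup_le fun hg2 => ?_
  have hgm : AEStronglyMeasurable g (volume.restrict (uCube d)) := hg1.aestronglyMeasurable
  set M : ℝ := (eLpNorm g ⊤ (volume.restrict (uCube d))).toReal with hMdef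
  have hM0 : 0 ≤ M := ENNReal.toReal_nonneg
  have hMfin : eLpNorm g ⊤ (volume.restrict (uCube d)) ≠ ⊤ := hg1.2.ne
  have hM : ∀ᵐ x ∂(volume.restrict (uCube d)), |g x| ≤ M := by
    have hae := ae_le_eLpNormEssSup (f := g) (μ := volume.restrict (uCube d))
    refine hae.mono fun x hx => ?_
    have : ((‖g x‖₊ : ℝ≥0∞)).toReal ≤ (eLpNormEssSup g (volume.restrict (uCube d))).toReal :=
      ENNReal.toReal_mono (by rwa [← eLpNorm_exponent_top]) hx
    rw [ENNReal.coe_toReal, coe_nnnorm, Real.norm_eq_abs] at this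
    have hMe : M = (eLpNormEssSup g (volume.restrict (uCube d))).toReal := by
      rw [hMdef, eLpNorm_exponent_top]
    rwa [← hMe] at this
  have hgU : IntegrableOn g (uCube d) :=
    memLp_one_iff_integrable.mp (hg1.mono_exponent le_top)
  set B : ℝ≥0∞ := ENNReal.ofReal |∫ x in uCube d, f x| +
      ∑' n : ℕ, ∑ k : Fin d → Fin (2 ^ n),
        ∑ ε ∈ Finset.univ.erase (fun _ : Fin d => false),
          ENNReal.ofReal |bCoeff d α f n (fun i => (k i : ℕ)) ε| with hBdef
  have hSqb : ∀ N, ENNReal.ofReal (Sq d f g N) ≤ ENNReal.ofReal ((2:ℝ) ^ d) * B := by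
    intro N
    have hreal : Sq d f g N ≤ |∫ x in uCube d, f x|
        + ∑ n ∈ Finset.range N, ∑ k : Fin d → Fin (2 ^ n),
            ∑ ε ∈ Finset.univ.erase (fun _ : Fin d => false),
              (2:ℝ) ^ d * |bCoeff d α f n (fun i => (k i : ℕ)) ε| := by
      rw [Sq_telescope hf hgU N]
      have hA : Sq d f g 0 ≤ |∫ x in uCube d, f x| :=
        le_trans (le_abs_self _) (Sq_zero_le hg2)
      have hB2 : (∑ n ∈ Finset.range N, ∑ k : Fin d → Fin (2 ^ n),
          ∑ ε ∈ Finset.univ.erase (fun _ : Fin d => false),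
            (∫ x in uCube d, f x * haarF d n (fun i => (k i : ℕ)) ε x) *
              (∫ x in uCube d, g x * haarF d n (fun i => (k i : ℕ)) ε x))
          ≤ ∑ n ∈ Finset.range N, ∑ k : Fin d → Fin (2 ^ n),
              ∑ ε ∈ Finset.univ.erase (fun _ : Fin d => false),
                (2:ℝ) ^ d * |bCoeff d α f n (fun i => (k i : ℕ)) ε| := by
        refine Finset.sum_le_sum fun n _ => Finset.sum_le_sum fun k _ =>
          Finset.sum_le_sum fun ε _ => ?_
        exact le_trans (le_abs_self _) (FG_le hd hα0 hgU hg2 (fun i => (k i).isLt) ε)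
      linarith
    calc ENNReal.ofReal (Sq d f g N)
        ≤ ENNReal.ofReal (|∫ x in uCube d, f x|
            + ∑ n ∈ Finset.range N, ∑ k : Fin d → Fin (2 ^ n),
                ∑ ε ∈ Finset.univ.erase (fun _ : Fin d => false),
                  (2:ℝ) ^ d * |bCoeff d α f n (fun i => (k i : ℕ)) ε|) :=
          ENNReal.ofReal_le_ofReal hreal
      _ = ENNReal.ofReal |∫ x in uCube d, f x|
            + ∑ n ∈ Finset.range N, ∑ k : Fin d → Fin (2 ^ n),
                ∑ ε ∈ Finset.univ.erase (fun _ : Fin d => false),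
                  ENNReal.ofReal ((2:ℝ) ^ d) *
                    ENNReal.ofReal |bCoeff d α f n (fun i => (k i : ℕ)) ε| := by
          rw [ENNReal.ofReal_add (abs_nonneg _) (Finset.sum_nonneg fun n _ =>
            Finset.sum_nonneg fun k _ => Finset.sum_nonneg fun ε _ => by positivity)]
          congr 1
          rw [ENNReal.ofReal_sum_of_nonneg (fun n _ => Finset.sum_nonneg fun k _ =>
            Finset.sum_nonneg fun ε _ => by positivity)]
          refine Finset.sum_congr rfl fun n _ => ?_
          rw [ENNReal.ofReal_sum_of_nonneg (fun k _ => Finset.sum_nonneg fun ε _ => by positivity)]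
          refine Finset.sum_congr rfl fun k _ => ?_
          rw [ENNReal.ofReal_sum_of_nonneg (fun ε _ => by positivity)]
          refine Finset.sum_congr rfl fun ε _ => ?_
          rw [ENNReal.ofReal_mul (by positivity)]
      _ = ENNReal.ofReal |∫ x in uCube d, f x|
            + ENNReal.ofReal ((2:ℝ) ^ d) * ∑ n ∈ Finset.range N, ∑ k : Fin d → Fin (2 ^ n),
                ∑ ε ∈ Finset.univ.erase (fun _ : Fin d => false),
                  ENNReal.ofReal |bCoeff d α f n (fun i => (k i : ℕ)) ε| := by
          congr 1
          rw [Finset.mul_sum]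
          refine Finset.sum_congr rfl fun n _ => ?_
          rw [Finset.mul_sum]
          refine Finset.sum_congr rfl fun k _ => ?_
          rw [Finset.mul_sum]
      _ ≤ ENNReal.ofReal |∫ x in uCube d, f x|
            + ENNReal.ofReal ((2:ℝ) ^ d) * ∑' n : ℕ, ∑ k : Fin d → Fin (2 ^ n),
                ∑ ε ∈ Finset.univ.erase (fun _ : Fin d => false),
                  ENNReal.ofReal |bCoeff d α f n (fun i => (k i : ℕ)) ε| := by
          apply add_le_add_right
          apply mul_le_mul_right
          exact ENNReal.sum_le_tsum (Finset.range N)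
      _ ≤ ENNReal.ofReal ((2:ℝ) ^ d) * B := by
          rw [hBdef, mul_add]
          apply add_le_add_left
          apply le_mul_of_one_le_left (zero_le (α := ℝ≥0∞))
          rw [ENNReal.one_le_ofReal]
          exact one_le_pow₀ (by norm_num)
  have htend : Filter.Tendsto (fun N => Sq d f g N) Filter.atTop
      (nhds (∫ x in uCube d, f x * g x)) := by
    rw [Metric.tendsto_atTop]
    intro ε hε
    obtain ⟨N₀, hN₀⟩ := DN_to_zero hf (ε / (M + 1)) (by positivity)
    refine ⟨N₀, fun N hN => ?_⟩
    have hd1 := Sq_diff_le hf hgm hM0 hM N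
    have hd2 := hN₀ N hN
    have hd3 : 0 ≤ DN d f N := DN_nonneg f N
    rw [Real.dist_eq, abs_sub_comm]
    have : M * DN d f N ≤ M * (ε / (M + 1)) := mul_le_mul_of_nonneg_left hd2 hM0
    have hlt : M * (ε / (M + 1)) < ε := by
      rw [mul_div_assoc']
      rw [div_lt_iff₀ (by linarith)]
      nlinarith
    linarith
  have hten2 : Filter.Tendsto (fun N => ENNReal.ofReal (Sq d f g N)) Filter.atTop
      (nhds (ENNReal.ofReal (∫ x in uCube d, f x * g x))) :=
    (ENNReal.continuous_ofReal.tendsto _).comp htend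
  exact le_of_tendsto' hten2 hSqb

end HaarAux


open HaarAux

/-- **Haar coefficient characterization of bounded fractional variation**
(Proposition 7.8). -/
theorem haar_characterization_fracVar (d : ℕ) (hd : 0 < d) (α : ℝ)
    (hα0 : 0 < α) (hα1 : α < 1) :
    ∃ C : ℝ, 0 < C ∧ ∀ f : Euc d → ℝ, IntegrableOn f (uCube d) →
      ENNReal.ofReal (1 / C) * hatV d α f ≤
        ENNReal.ofReal |∫ x in uCube d, f x| +
          ∑' n : ℕ, ∑ k : Fin d → Fin (2 ^ n),
            ∑ ε ∈ Finset.univ.erase (fun _ : Fin d => false),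
              ENNReal.ofReal |bCoeff d α f n (fun i => (k i : ℕ)) ε| ∧
      ENNReal.ofReal |∫ x in uCube d, f x| +
          ∑' n : ℕ, ∑ k : Fin d → Fin (2 ^ n),
            ∑ ε ∈ Finset.univ.erase (fun _ : Fin d => false),
              ENNReal.ofReal |bCoeff d α f n (fun i => (k i : ℕ)) ε| ≤
        ENNReal.ofReal C * hatV d α f := by
  set γ : ℝ := (α + (d : ℝ) - 1) / d with hγ
  have hγ1 : γ < 1 := gamma_lt_one hd hα1
  set C₁ : ℝ := (2:ℝ) ^ d / (rr d γ - 1) with hC₁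
  have hC₁pos : 0 < C₁ := by
    apply div_pos (pow_pos two_pos d)
    linarith [rr_gt_one hd hγ1]
  set C : ℝ := max (1 + C₁) ((2:ℝ) ^ d) with hC
  have hCpos : 0 < C := lt_of_lt_of_le (by linarith) (le_max_left _ _)
  refine ⟨C, hCpos, fun f hf => ?_⟩
  set B : ℝ≥0∞ := ENNReal.ofReal |∫ x in uCube d, f x| +
      ∑' n : ℕ, ∑ k : Fin d → Fin (2 ^ n),
        ∑ ε ∈ Finset.univ.erase (fun _ : Fin d => false),
          ENNReal.ofReal |bCoeff d α f n (fun i => (k i : ℕ)) ε| with hB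
  constructor
  · -- lower estimate
    have hlow : hatV d α f ≤ ENNReal.ofReal ((2:ℝ) ^ d) * B := lower_total hd hα0 hα1 f hf
    calc ENNReal.ofReal (1 / C) * hatV d α f
        ≤ ENNReal.ofReal (1 / C) * (ENNReal.ofReal ((2:ℝ) ^ d) * B) :=
          mul_le_mul_right hlow _
      _ = ENNReal.ofReal ((2:ℝ) ^ d / C) * B := by
          rw [← mul_assoc, ← ENNReal.ofReal_mul (by positivity)]
          congr 2
          ring
      _ ≤ 1 * B := by
          apply mul_le_mul_left
          rw [show (1 : ℝ≥0∞) = ENNReal.ofReal 1 by rw [ENNReal.ofReal_one]]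
          apply ENNReal.ofReal_le_ofReal
          rw [div_le_one hCpos]
          exact le_max_right _ _
      _ = B := one_mul B
  · -- upper estimate
    calc B ≤ ENNReal.ofReal (1 + C₁) * hatV d α f := upper_total hd hα1 f hf
      _ ≤ ENNReal.ofReal C * hatV d α f := by
          apply mul_le_mul_left
          exact ENNReal.ofReal_le_ofReal (le_max_left _ _)

end
end

section
/- Compactness theorem for bounded fractional variation (final theorem of Section 7). Let d ≥ 1 and α ∈ (0,1). Let (f_p) be a sequence in L¹([0,1]^d) with sup_p V̂^α(f_p) < ∞. Then there is a subsequence of (f_p) that converges in L¹([0,1]^d) to some f ∈ L¹([0,1]^d) with V̂^α f < ∞. -/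
open MeasureTheory Filter
open scoped BigOperators ENNReal Classical

noncomputable section

namespace Aux

variable {d : ℕ}

lemma dyVol_pos (d n : ℕ) : 0 < dyVol d n := by unfold dyVol; positivity

lemma dyVol_eq_rpow (d n : ℕ) : dyVol d n = (2:ℝ) ^ (-((n*d : ℕ):ℝ)) := by
  rw [dyVol, ← Real.rpow_natCast 2 (n*d), ← Real.rpow_neg (by norm_num)]

lemma dyVol_rpow (d n : ℕ) (r : ℝ) : dyVol d n ^ r = (2:ℝ) ^ (-((n*d : ℕ):ℝ) * r) := by
  rw [dyVol_eq_rpow, ← Real.rpow_mul (by norm_num)]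

lemma dyVol_eq_pow (d n : ℕ) : dyVol d n = ((2:ℝ)^n)⁻¹ ^ d := by
  rw [dyVol, inv_pow, pow_mul]

lemma dyVol_mono {d m n : ℕ} (h : m ≤ n) : dyVol d n ≤ dyVol d m := by
  unfold dyVol
  have := pow_le_pow_right₀ (by norm_num : (1:ℝ) ≤ 2) (Nat.mul_le_mul_right d h)
  exact inv_anti₀ (by positivity) this

lemma two_rpow_le {a b : ℝ} (h : a ≤ b) : (2:ℝ)^a ≤ (2:ℝ)^b :=
  (Real.rpow_le_rpow_left_iff (by norm_num)).2 h

lemma dy_ineq1 {γ : ℝ} (hγ1 : γ ≤ 1) {a m : ℕ} (h : a ≤ m) :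
    dyVol d a ^ (γ-1) * dyVol d m ≤ dyVol d m ^ γ := by
  rw [dyVol_rpow, dyVol_rpow, dyVol_eq_rpow, ← Real.rpow_add (by norm_num)]
  apply two_rpow_le
  have huv : ((a*d : ℕ):ℝ) ≤ ((m*d : ℕ):ℝ) := by
    exact_mod_cast Nat.mul_le_mul_right d h
  nlinarith

lemma dy_ineq2 {γ : ℝ} (hγ0 : 0 ≤ γ) {a m : ℕ} (h : m ≤ a) :
    dyVol d a ^ (γ-1) * dyVol d a ≤ dyVol d m ^ γ := by
  rw [dyVol_rpow, dyVol_rpow, dyVol_eq_rpow, ← Real.rpow_add (by norm_num)]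
  apply two_rpow_le
  have huv : ((m*d : ℕ):ℝ) ≤ ((a*d : ℕ):ℝ) := by
    exact_mod_cast Nat.mul_le_mul_right d h
  nlinarith

lemma dyVol_rpow_pos (d n : ℕ) (r : ℝ) : 0 < dyVol d n ^ r :=
  Real.rpow_pos_of_pos (dyVol_pos d n) r

lemma dyVol_rpow_inv (d n : ℕ) (γ : ℝ) :
    (2⁻¹ * dyVol d n ^ (γ-1))⁻¹ = 2 * dyVol d n ^ (1-γ) := by
  rw [mul_inv, inv_inv]
  congr 1
  rw [← Real.rpow_neg (dyVol_pos d n).le]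
  ring_nf

lemma dyVol_rpow_tendsto {γ : ℝ} (hd : 0 < d) (hγ : γ < 1) :
    Tendsto (fun n => dyVol d (n+1) ^ (1-γ)) atTop (nhds 0) := by
  set q : ℝ := (2:ℝ) ^ (-((d:ℝ)*(1-γ))) with hq
  have hq0 : 0 ≤ q := (Real.rpow_pos_of_pos (by norm_num) _).le
  have hq1 : q < 1 := by
    apply Real.rpow_lt_one_of_one_lt_of_neg (by norm_num)
    have : (0:ℝ) < d := by exact_mod_cast hd
    nlinarith
  have heq : ∀ n : ℕ, dyVol d (n+1) ^ (1-γ) = q ^ (n+1) := by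
    intro n
    rw [dyVol_rpow, hq, ← Real.rpow_natCast ((2:ℝ) ^ (-((d:ℝ)*(1-γ)))) (n+1),
      ← Real.rpow_mul (by norm_num)]
    congr 1
    push_cast
    ring
  simp_rw [heq]
  exact (tendsto_pow_atTop_nhds_zero_of_lt_one hq0 hq1).comp (tendsto_add_atTop_nat 1)

lemma gamma_bounds {α : ℝ} (hd : 0 < d) (hα0 : 0 < α) (hα1 : α < 1) :
    0 ≤ (α + (d:ℝ) - 1)/d ∧ (α + (d:ℝ) - 1)/d < 1 := by
  have hd' : (1:ℝ) ≤ d := by exact_mod_cast hd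
  constructor
  · apply div_nonneg (by linarith) (by linarith)
  · rw [div_lt_one (by linarith)]
    linarith
def dyCubeH (d n : ℕ) (k : Fin d → ℕ) : Set (Euc d) :=
  {x | ∀ i, (k i : ℝ) / 2 ^ n ≤ x i ∧ x i < ((k i : ℝ) + 1) / 2 ^ n}

lemma dyCube_preimage (n : ℕ) (k : Fin d → ℕ) :
    dyCube d n k = (MeasurableEquiv.toLp 2 (Fin d → ℝ)).symm ⁻¹'
      (Set.univ.pi fun i => Set.Icc ((k i : ℝ) / 2 ^ n) (((k i : ℝ) + 1) / 2 ^ n)) := by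
  ext x; exact ⟨fun h i _ => h i, fun h i => h i trivial⟩

lemma dyCubeH_preimage (n : ℕ) (k : Fin d → ℕ) :
    dyCubeH d n k = (MeasurableEquiv.toLp 2 (Fin d → ℝ)).symm ⁻¹'
      (Set.univ.pi fun i => Set.Ico ((k i : ℝ) / 2 ^ n) (((k i : ℝ) + 1) / 2 ^ n)) := by
  ext x; exact ⟨fun h i _ => h i, fun h i => h i trivial⟩

lemma measurableSet_dyCube (n : ℕ) (k : Fin d → ℕ) : MeasurableSet (dyCube d n k) := by
  rw [dyCube_preimage]
  exact (MeasurableSet.univ_pi fun i => measurableSet_Icc).preimage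
    (MeasurableEquiv.toLp 2 (Fin d → ℝ)).symm.measurable

lemma measurableSet_dyCubeH (n : ℕ) (k : Fin d → ℕ) : MeasurableSet (dyCubeH d n k) := by
  rw [dyCubeH_preimage]
  exact (MeasurableSet.univ_pi fun i => measurableSet_Ico).preimage
    (MeasurableEquiv.toLp 2 (Fin d → ℝ)).symm.measurable

lemma volume_preimage_pi (s : ∀ _ : Fin d, Set ℝ) (hs : ∀ i, MeasurableSet (s i)) :
    volume ((MeasurableEquiv.toLp 2 (Fin d → ℝ)).symm ⁻¹' (Set.univ.pi s)) = ∏ i, volume (s i) := by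
  rw [(EuclideanSpace.volume_preserving_symm_measurableEquiv_toLp (Fin d)).measure_preimage
    ((MeasurableSet.univ_pi hs).nullMeasurableSet), volume_pi_pi]

lemma volume_dyCube (n : ℕ) (k : Fin d → ℕ) :
    volume (dyCube d n k) = ENNReal.ofReal ((2 ^ n : ℝ)⁻¹) ^ d := by
  rw [dyCube_preimage, volume_preimage_pi _ (fun i => measurableSet_Icc)]
  have : ∀ i : Fin d, volume (Set.Icc ((k i : ℝ) / 2 ^ n) (((k i : ℝ) + 1) / 2 ^ n))
      = ENNReal.ofReal ((2 ^ n : ℝ)⁻¹) := by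
    intro i; rw [Real.volume_Icc]; ring_nf
  simp [this]

lemma volume_dyCubeH (n : ℕ) (k : Fin d → ℕ) :
    volume (dyCubeH d n k) = ENNReal.ofReal ((2 ^ n : ℝ)⁻¹) ^ d := by
  rw [dyCubeH_preimage, volume_preimage_pi _ (fun i => measurableSet_Ico)]
  have : ∀ i : Fin d, volume (Set.Ico ((k i : ℝ) / 2 ^ n) (((k i : ℝ) + 1) / 2 ^ n))
      = ENNReal.ofReal ((2 ^ n : ℝ)⁻¹) := by
    intro i; rw [Real.volume_Ico]; ring_nf
  simp [this]

lemma volume_coord_eq (i : Fin d) (c : ℝ) : volume {x : Euc d | x i = c} = 0 := by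
  have h : {x : Euc d | x i = c} = (MeasurableEquiv.toLp 2 (Fin d → ℝ)).symm ⁻¹'
      (Set.univ.pi (Function.update (fun _ : Fin d => (Set.univ : Set ℝ)) i {c})) := by
    ext x
    constructor
    · intro hx j _
      rcases eq_or_ne j i with rfl | hj
      · simpa [Function.update_self] using hx
      · simp [Function.update_of_ne hj]
    · intro hx
      have := hx i trivial
      simpa [Function.update_self] using this
  rw [h, (EuclideanSpace.volume_preserving_symm_measurableEquiv_toLp (Fin d)).measure_preimage]
  · rw [volume_pi_pi]
    exact Finset.prod_eq_zero (Finset.mem_univ i) (by simp [Function.update_self])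
  · exact (MeasurableSet.univ_pi (fun j => by
      rcases eq_or_ne j i with rfl | hj
      · simp [Function.update_self]
      · simp [Function.update_of_ne hj])).nullMeasurableSet
lemma dyCubeH_subset (n : ℕ) (k : Fin d → ℕ) : dyCubeH d n k ⊆ dyCube d n k :=
  fun x hx i => ⟨(hx i).1, le_of_lt (hx i).2⟩

lemma dyCubeH_ae_eq (n : ℕ) (k : Fin d → ℕ) : dyCubeH d n k =ᵐ[volume] dyCube d n k := by
  rw [MeasureTheory.ae_eq_set]
  refine ⟨by rw [Set.diff_eq_empty.2 (dyCubeH_subset n k)]; simp, ?_⟩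
  refine measure_mono_null (fun x hx => ?_)
    (measure_iUnion_null (fun i => volume_coord_eq i (((k i : ℝ) + 1) / 2 ^ n)))
  obtain ⟨hx1, hx2⟩ := hx
  have : ∃ i, ¬ (x i < ((k i : ℝ) + 1) / 2 ^ n) := by
    by_contra h
    push_neg at h
    exact hx2 (fun i => ⟨(hx1 i).1, h i⟩)
  obtain ⟨i, hi⟩ := this
  exact Set.mem_iUnion.2 ⟨i, le_antisymm (hx1 i).2 (not_lt.1 hi)⟩

lemma setIntegral_dyCube_eq (n : ℕ) (k : Fin d → ℕ) (h : Euc d → ℝ) :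
    ∫ x in dyCube d n k, h x = ∫ x in dyCubeH d n k, h x :=
  (MeasureTheory.setIntegral_congr_set (dyCubeH_ae_eq n k).symm)

/- interval lemmas -/
lemma Ico_dy_subset_or_disjoint {m n p q : ℕ} (hmn : m ≤ n) :
    Set.Ico ((p:ℝ)/2^n) (((p:ℝ)+1)/2^n) ⊆ Set.Ico ((q:ℝ)/2^m) (((q:ℝ)+1)/2^m) ∨
    Disjoint (Set.Ico ((p:ℝ)/2^n) (((p:ℝ)+1)/2^n)) (Set.Ico ((q:ℝ)/2^m) (((q:ℝ)+1)/2^m)) := by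
  by_cases hdisj : Disjoint (Set.Ico ((p:ℝ)/2^n) (((p:ℝ)+1)/2^n))
      (Set.Ico ((q:ℝ)/2^m) (((q:ℝ)+1)/2^m))
  · exact Or.inr hdisj
  left
  obtain ⟨c, hc1, hc2⟩ := Set.not_disjoint_iff.1 hdisj
  obtain ⟨s, rfl⟩ : ∃ s, n = m + s := ⟨n - m, (Nat.add_sub_cancel' hmn).symm⟩
  have h2m : (0:ℝ) < 2 ^ m := by positivity
  have h2n : (0:ℝ) < 2 ^ (m + s) := by positivity
  have hpow : (2:ℝ) ^ (m + s) = 2 ^ m * 2 ^ s := by rw [pow_add]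
  -- p < (q+1) * 2^s and q * 2^s ≤ p, as naturals
  have h1 : (p : ℝ) < ((q:ℝ)+1) * 2 ^ s := by
    have := lt_of_le_of_lt hc1.1 hc2.2
    rw [div_lt_div_iff₀ h2n h2m] at this
    nlinarith [this]
  have h2 : ((q:ℝ)) * 2 ^ s < (p:ℝ) + 1 := by
    have := lt_of_le_of_lt hc2.1 hc1.2
    rw [div_lt_div_iff₀ h2m h2n] at this
    nlinarith [this]
  have h1n : p + 1 ≤ (q+1) * 2 ^ s := by
    have : (p:ℝ) < (((q+1) * 2^s : ℕ) : ℝ) := by push_cast; linarith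
    exact_mod_cast Nat.cast_lt.1 this
  have h2n' : q * 2 ^ s ≤ p := by
    have : ((q * 2^s : ℕ) : ℝ) < (p:ℝ) + 1 := by push_cast; linarith
    have := Nat.lt_succ_iff.1 (by exact_mod_cast this : q * 2^s < p + 1)
    exact this
  intro y hy
  have hq : ((q:ℝ) * 2^s) ≤ p := by exact_mod_cast h2n'
  have hp : ((p:ℝ) + 1) ≤ ((q:ℝ)+1) * 2^s := by exact_mod_cast h1n
  constructor
  · have : (q:ℝ)/2^m = ((q:ℝ) * 2^s)/2^(m+s) := by rw [hpow]; field_simp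
    rw [this]
    exact le_trans (by gcongr) hy.1
  · have : ((q:ℝ)+1)/2^m = (((q:ℝ)+1) * 2^s)/2^(m+s) := by rw [hpow]; field_simp
    rw [this]
    exact lt_of_lt_of_le hy.2 (by gcongr)
lemma mem_dyCubeH_iff {n : ℕ} {k : Fin d → ℕ} {x : Euc d} :
    x ∈ dyCubeH d n k ↔ ∀ i, x i ∈ Set.Ico ((k i : ℝ)/2^n) (((k i : ℝ)+1)/2^n) := Iff.rfl

lemma Ico_dy_disjoint {n p q : ℕ} (h : p ≠ q) :
    Disjoint (Set.Ico ((p:ℝ)/2^n) (((p:ℝ)+1)/2^n)) (Set.Ico ((q:ℝ)/2^n) (((q:ℝ)+1)/2^n)) := by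
  have key : ∀ p q : ℕ, p < q →
      Disjoint (Set.Ico ((p:ℝ)/2^n) (((p:ℝ)+1)/2^n)) (Set.Ico ((q:ℝ)/2^n) (((q:ℝ)+1)/2^n)) := by
    intro p q h'
    rw [Set.Ico_disjoint_Ico]
    have hpq : ((p:ℝ)+1)/2^n ≤ (q:ℝ)/2^n := by
      gcongr
      exact_mod_cast h'
    calc min (((p:ℝ)+1)/2^n) (((q:ℝ)+1)/2^n) ≤ ((p:ℝ)+1)/2^n := min_le_left _ _
      _ ≤ (q:ℝ)/2^n := hpq
      _ ≤ max ((p:ℝ)/2^n) ((q:ℝ)/2^n) := le_max_right _ _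
  rcases h.lt_or_gt with h' | h'
  · exact key p q h'
  · exact (key q p h').symm

lemma dyCubeH_disjoint {n : ℕ} {k k' : Fin d → ℕ} (h : k ≠ k') :
    Disjoint (dyCubeH d n k) (dyCubeH d n k') := by
  obtain ⟨i, hi⟩ := Function.ne_iff.1 h
  rw [Set.disjoint_left]
  intro x hx hx'
  exact Set.disjoint_left.1 (Ico_dy_disjoint hi) (hx i) (hx' i)

lemma dyCubeH_subset_of_nonempty_inter {m n : ℕ} (hmn : m ≤ n) {k k' : Fin d → ℕ}
    (hne : (dyCubeH d n k ∩ dyCubeH d m k').Nonempty) : dyCubeH d n k ⊆ dyCubeH d m k' := by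
  obtain ⟨c, hc1, hc2⟩ := hne
  intro x hx i
  rcases Ico_dy_subset_or_disjoint (p := k i) (q := k' i) hmn with hsub | hdis
  · exact hsub (hx i)
  · exact absurd (hc2 i) (Set.disjoint_left.1 hdis (hc1 i))

lemma exists_child {m n : ℕ} (hmn : m ≤ n) {k' : Fin d → ℕ} (hk' : ∀ i, k' i < 2 ^ m)
    {x : Euc d} (hx : x ∈ dyCubeH d m k') :
    ∃ k : Fin d → Fin (2^n), x ∈ dyCubeH d n (fun i => (k i : ℕ)) ∧
      dyCubeH d n (fun i => (k i : ℕ)) ⊆ dyCubeH d m k' := by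
  set k : Fin d → ℕ := fun i => ⌊2^n * x i⌋₊ with hk
  have hx0 : ∀ i, 0 ≤ x i := fun i => le_trans (by positivity) (hx i).1
  have hklt : ∀ i, k i < 2^n := by
    intro i
    have hxi1 : x i < 1 := by
      refine lt_of_lt_of_le (hx i).2 ?_
      rw [div_le_one (by positivity)]
      have : k' i + 1 ≤ 2^m := hk' i
      exact_mod_cast this
    have h2 : (2:ℝ)^n * x i < (2^n : ℕ) := by
      push_cast
      nlinarith [pow_pos (by norm_num : (0:ℝ) < 2) n]
    exact (Nat.floor_lt (mul_nonneg (by positivity) (hx0 i))).2 h2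
  have hmem : x ∈ dyCubeH d n k := by
    intro i
    have h0 : (0:ℝ) ≤ 2^n * x i := mul_nonneg (by positivity) (hx0 i)
    have hp : (0:ℝ) < 2^n := by positivity
    constructor
    · rw [div_le_iff₀ hp]
      calc (k i : ℝ) ≤ 2^n * x i := Nat.floor_le h0
        _ = x i * 2^n := mul_comm _ _
    · rw [lt_div_iff₀ hp]
      calc x i * 2^n = 2^n * x i := mul_comm _ _
        _ < (k i : ℝ) + 1 := Nat.lt_floor_add_one _
  exact ⟨fun i => ⟨k i, hklt i⟩, hmem,
    dyCubeH_subset_of_nonempty_inter hmn ⟨x, hmem, hx⟩⟩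

def childSet (d m n : ℕ) (k' : Fin d → ℕ) : Finset (Fin d → Fin (2^n)) :=
  Finset.univ.filter fun k => dyCubeH d n (fun i => (k i : ℕ)) ⊆ dyCubeH d m k'

lemma dyCubeH_eq_biUnion {m n : ℕ} (hmn : m ≤ n) {k' : Fin d → ℕ} (hk' : ∀ i, k' i < 2 ^ m) :
    dyCubeH d m k' = ⋃ k ∈ childSet d m n k', dyCubeH d n (fun i => (k i : ℕ)) := by
  ext x
  constructor
  · intro hx
    obtain ⟨k, hk1, hk2⟩ := exists_child hmn hk' hx
    exact Set.mem_biUnion (Finset.mem_filter.2 ⟨Finset.mem_univ _, hk2⟩) hk1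
  · intro hx
    obtain ⟨k, hk, hxk⟩ := Set.mem_iUnion₂.1 hx
    exact (Finset.mem_filter.1 hk).2 hxk

lemma setIntegral_partition {m n : ℕ} (hmn : m ≤ n) {k' : Fin d → ℕ} (hk' : ∀ i, k' i < 2 ^ m)
    {h : Euc d → ℝ} (hint : IntegrableOn h (dyCubeH d m k')) :
    ∫ x in dyCubeH d m k', h x
      = ∑ k ∈ childSet d m n k', ∫ x in dyCubeH d n (fun i => (k i : ℕ)), h x := by
  conv_lhs => rw [dyCubeH_eq_biUnion hmn hk']
  refine integral_biUnion_finset _ (fun k _ => measurableSet_dyCubeH _ _) ?_ ?_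
  · intro k hk k2 hk2 hne
    exact dyCubeH_disjoint (fun hEq => hne (funext fun i => Fin.ext (congrFun hEq i)))
  · intro k hk
    exact hint.mono_set (Finset.mem_filter.1 hk).2
lemma volume_dyCube' (n : ℕ) (k : Fin d → ℕ) :
    volume (dyCube d n k) = ENNReal.ofReal (dyVol d n) := by
  rw [volume_dyCube, dyVol_eq_pow, ENNReal.ofReal_pow (by positivity)]

lemma volume_dyCubeH' (n : ℕ) (k : Fin d → ℕ) :
    volume (dyCubeH d n k) = ENNReal.ofReal (dyVol d n) := by
  rw [volume_dyCubeH, dyVol_eq_pow, ENNReal.ofReal_pow (by positivity)]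

lemma volume_dyCubeH_toReal (n : ℕ) (k : Fin d → ℕ) :
    (volume (dyCubeH d n k)).toReal = dyVol d n := by
  rw [volume_dyCubeH', ENNReal.toReal_ofReal (dyVol_pos d n).le]

lemma dyNorm (d n : ℕ) : (2:ℝ)^(n*d) * dyVol d n = 1 := by
  rw [dyVol]; field_simp

lemma mem_uCube {x : Euc d} : x ∈ uCube d ↔ ∀ i, 0 ≤ x i ∧ x i ≤ 1 := by
  simp [uCube, dyCube]

lemma dyCube_subset_uCube {n : ℕ} {k : Fin d → ℕ} (hk : ∀ i, k i < 2 ^ n) :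
    dyCube d n k ⊆ uCube d := by
  intro x hx
  rw [mem_uCube]
  intro i
  obtain ⟨h1, h2⟩ := hx i
  have hp : (0:ℝ) < 2^n := by positivity
  constructor
  · exact le_trans (by positivity) h1
  · refine le_trans h2 ?_
    rw [div_le_one hp]
    have : (k i : ℝ) + 1 ≤ ((2^n : ℕ) : ℝ) := by exact_mod_cast hk i
    simpa using this

lemma dyCubeH_subset_uCube {n : ℕ} {k : Fin d → ℕ} (hk : ∀ i, k i < 2 ^ n) :
    dyCubeH d n k ⊆ uCube d := (dyCubeH_subset n k).trans (dyCube_subset_uCube hk)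

lemma volume_uCube : volume (uCube d) = ENNReal.ofReal (dyVol d 0) := volume_dyCube' 0 _

instance uFinite : IsFiniteMeasure (volume.restrict (uCube d)) := by
  constructor
  rw [Measure.restrict_apply_univ, volume_uCube]
  exact ENNReal.ofReal_lt_top

/-- `L∞`-type integrability on the unit cube. -/
lemma integrableOn_of_bound {g : Euc d → ℝ} {C : ℝ} (hg : Measurable g)
    (hb : ∀ x, |g x| ≤ C) : IntegrableOn g (uCube d) := by
  have : MemLp g ⊤ (volume.restrict (uCube d)) :=
    memLp_top_of_bound hg.aestronglyMeasurable C (Filter.Eventually.of_forall hb)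
  exact this.integrable le_top

/-- The dyadic projection (conditional expectation onto generation-`n` cubes). -/
def EnP (d n : ℕ) (g : Euc d → ℝ) : Euc d → ℝ :=
  fun x => ∑ k : Fin d → Fin (2^n),
    ((2:ℝ) ^ (n*d) * ∫ y in dyCubeH d n (fun i => (k i:ℕ)), g y) *
      Set.indicator (dyCubeH d n (fun i => (k i:ℕ))) (fun _ => (1:ℝ)) x

lemma measurable_EnP (n : ℕ) (g : Euc d → ℝ) : Measurable (EnP d n g) := by
  apply Finset.measurable_sum
  intro k _
  exact (measurable_const.indicator (measurableSet_dyCubeH _ _)).const_mul _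

lemma abs_setIntegral_le {g : Euc d → ℝ} {C : ℝ} {s : Set (Euc d)} (hvol : volume s ≠ ⊤)
    (hg : AEStronglyMeasurable g (volume.restrict s)) (hb : ∀ x, |g x| ≤ C) :
    |∫ x in s, g x| ≤ C * (volume s).toReal := by
  have := norm_setIntegral_le_of_norm_le_const (μ := volume) (s := s) (f := g)
    (lt_top_iff_ne_top.2 hvol) (fun x _ => hb x)
  simpa [measureReal_def] using this

lemma EnP_bound {n : ℕ} {g : Euc d → ℝ} {C : ℝ} (hg : Measurable g) (hC : 0 ≤ C)
    (hb : ∀ x, |g x| ≤ C) (x : Euc d) : |EnP d n g x| ≤ C := by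
  by_cases hx : ∃ k0 : Fin d → Fin (2^n), x ∈ dyCubeH d n (fun i => (k0 i : ℕ))
  · obtain ⟨k0, hk0⟩ := hx
    rw [EnP, Finset.sum_eq_single k0]
    · rw [Set.indicator_of_mem hk0]
      have h1 : |∫ y in dyCubeH d n (fun i => (k0 i:ℕ)), g y|
          ≤ C * (volume (dyCubeH d n (fun i => (k0 i:ℕ)))).toReal := by
        apply abs_setIntegral_le
        · rw [volume_dyCubeH']; exact ENNReal.ofReal_ne_top
        · exact hg.aestronglyMeasurable
        · exact hb
      rw [volume_dyCubeH_toReal] at h1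
      rw [mul_one, abs_mul, abs_of_nonneg (by positivity : (0:ℝ) ≤ (2:ℝ)^(n*d))]
      calc (2:ℝ)^(n*d) * |∫ y in dyCubeH d n (fun i => (k0 i:ℕ)), g y|
          ≤ (2:ℝ)^(n*d) * (C * dyVol d n) := by
            apply mul_le_mul_of_nonneg_left h1 (by positivity)
        _ = C * ((2:ℝ)^(n*d) * dyVol d n) := by ring
        _ = C := by rw [dyNorm]; ring
    · intro k _ hk
      have : x ∉ dyCubeH d n (fun i => (k i : ℕ)) := by
        intro hx'
        exact Set.disjoint_left.1
          (dyCubeH_disjoint (fun hEq => hk (funext fun i => Fin.ext (congrFun hEq i)))) hx' hk0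
      rw [Set.indicator_of_notMem this, mul_zero]
    · intro h; exact absurd (Finset.mem_univ k0) h
  · push_neg at hx
    rw [EnP]
    have : ∀ k : Fin d → Fin (2^n), ((2:ℝ) ^ (n*d) * ∫ y in dyCubeH d n (fun i => (k i:ℕ)), g y) *
        Set.indicator (dyCubeH d n (fun i => (k i:ℕ))) (fun _ => (1:ℝ)) x = 0 := by
      intro k
      rw [Set.indicator_of_notMem (hx k), mul_zero]
    rw [Finset.sum_congr rfl (fun k _ => this k), Finset.sum_const_zero]
    simpa using hC

lemma abs_indicator_one_le (K : Set (Euc d)) (x : Euc d) :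
    |Set.indicator K (fun _ => (1:ℝ)) x| ≤ 1 := by
  by_cases hx : x ∈ K <;> simp [hx]

lemma abs_mul_indicator_le (c : ℝ) (K : Set (Euc d)) (x : Euc d) :
    |c * Set.indicator K (fun _ => (1:ℝ)) x| ≤ |c| := by
  rw [abs_mul]
  exact mul_le_of_le_one_right (abs_nonneg c) (abs_indicator_one_le K x)

lemma EnP_abs_le_sum {n : ℕ} (g : Euc d → ℝ) (x : Euc d) :
    |EnP d n g x| ≤ ∑ k : Fin d → Fin (2^n),
      |(2:ℝ) ^ (n*d) * ∫ y in dyCubeH d n (fun i => (k i:ℕ)), g y| := by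
  refine le_trans (Finset.abs_sum_le_sum_abs _ _) ?_
  exact Finset.sum_le_sum fun k _ => abs_mul_indicator_le _ _ x

/-- Each summand of `EnP` is integrable on any finite-volume set. -/
lemma integrableOn_summand {n : ℕ} (c : ℝ) (k : Fin d → ℕ) (s : Set (Euc d))
    (hs : volume s ≠ ⊤) :
    IntegrableOn (fun x => c * Set.indicator (dyCubeH d n k) (fun _ => (1:ℝ)) x) s := by
  apply Integrable.const_mul
  apply Integrable.indicator _ (measurableSet_dyCubeH _ _)
  exact integrableOn_const hs

lemma integrableOn_EnP {n : ℕ} (g : Euc d → ℝ) (s : Set (Euc d)) (hs : volume s ≠ ⊤) :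
    IntegrableOn (EnP d n g) s := by
  apply MeasureTheory.integrable_finset_sum
  intro k _
  exact integrableOn_summand _ _ s hs

lemma volume_uCube_ne_top : volume (uCube (d := d)) ≠ ⊤ := by
  rw [volume_uCube]; exact ENNReal.ofReal_ne_top

lemma volume_dyCubeH_ne_top (n : ℕ) (k : Fin d → ℕ) : volume (dyCubeH d n k) ≠ ⊤ := by
  rw [volume_dyCubeH']; exact ENNReal.ofReal_ne_top

lemma setIntegral_uCube_indicator {n : ℕ} {k : Fin d → ℕ} (hk : ∀ i, k i < 2^n)
    (h : Euc d → ℝ) :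
    ∫ x in uCube d, Set.indicator (dyCubeH d n k) h x = ∫ x in dyCubeH d n k, h x := by
  rw [setIntegral_indicator (measurableSet_dyCubeH _ _),
    Set.inter_eq_self_of_subset_right (dyCubeH_subset_uCube hk)]

lemma mul_indicator_eq (K : Set (Euc d)) (h : Euc d → ℝ) (x : Euc d) :
    Set.indicator K (fun _ => (1:ℝ)) x * h x = Set.indicator K h x := by
  by_cases hx : x ∈ K <;> simp [hx]

/-- The key self-adjointness computation. -/
lemma integral_mul_EnP {n : ℕ} {h : Euc d → ℝ} (hh : IntegrableOn h (uCube d))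
    (g : Euc d → ℝ) :
    ∫ x in uCube d, h x * EnP d n g x
      = ∑ k : Fin d → Fin (2^n), ((2:ℝ)^(n*d) * ∫ y in dyCubeH d n (fun i => (k i:ℕ)), g y)
          * ∫ y in dyCubeH d n (fun i => (k i:ℕ)), h y := by
  have hint : ∀ k : Fin d → Fin (2^n), IntegrableOn
      (fun x => h x * (((2:ℝ)^(n*d) * ∫ y in dyCubeH d n (fun i => (k i:ℕ)), g y) *
        Set.indicator (dyCubeH d n (fun i => (k i:ℕ))) (fun _ => (1:ℝ)) x)) (uCube d) := by
    intro k
    have heq : ∀ x, h x * (((2:ℝ)^(n*d) * ∫ y in dyCubeH d n (fun i => (k i:ℕ)), g y) *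
        Set.indicator (dyCubeH d n (fun i => (k i:ℕ))) (fun _ => (1:ℝ)) x)
        = (((2:ℝ)^(n*d) * ∫ y in dyCubeH d n (fun i => (k i:ℕ)), g y) *
          Set.indicator (dyCubeH d n (fun i => (k i:ℕ))) (fun _ => (1:ℝ)) x) * h x := by
      intro x; ring
    simp_rw [heq]
    apply Integrable.bdd_mul hh
    · exact ((measurable_const.indicator (measurableSet_dyCubeH (d := d) n
        (fun i => (k i:ℕ)))).const_mul _).aestronglyMeasurable
    · exact Filter.Eventually.of_forall (fun x => abs_mul_indicator_le _ _ x)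
  have expand : ∀ x, h x * EnP d n g x = ∑ k : Fin d → Fin (2^n),
      h x * (((2:ℝ)^(n*d) * ∫ y in dyCubeH d n (fun i => (k i:ℕ)), g y) *
        Set.indicator (dyCubeH d n (fun i => (k i:ℕ))) (fun _ => (1:ℝ)) x) := by
    intro x
    rw [EnP, Finset.mul_sum]
  simp_rw [expand]
  rw [integral_finset_sum _ (fun k _ => hint k)]
  apply Finset.sum_congr rfl
  intro k _
  have heq2 : ∀ x, h x * (((2:ℝ)^(n*d) * ∫ y in dyCubeH d n (fun i => (k i:ℕ)), g y) *
      Set.indicator (dyCubeH d n (fun i => (k i:ℕ))) (fun _ => (1:ℝ)) x)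
      = ((2:ℝ)^(n*d) * ∫ y in dyCubeH d n (fun i => (k i:ℕ)), g y) *
        (Set.indicator (dyCubeH d n (fun i => (k i:ℕ))) (fun _ => (1:ℝ)) x * h x) := by
    intro x; ring
  simp_rw [heq2, mul_indicator_eq]
  rw [MeasureTheory.integral_const_mul, setIntegral_uCube_indicator (fun i => (k i).isLt)]

/-- `EnP` reproduces integrals over coarser half-open dyadic cubes. -/
lemma setIntegral_EnP_coarse {m n : ℕ} (hmn : m ≤ n) {k' : Fin d → ℕ} (hk' : ∀ i, k' i < 2^m)
    {g : Euc d → ℝ} (hg : IntegrableOn g (uCube d)) :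
    ∫ x in dyCubeH d m k', EnP d n g x = ∫ x in dyCubeH d m k', g x := by
  rw [setIntegral_partition hmn hk' (hg.mono_set (dyCubeH_subset_uCube hk'))]
  have hsum : ∫ x in dyCubeH d m k', EnP d n g x = ∑ k : Fin d → Fin (2^n),
      ((2:ℝ)^(n*d) * ∫ y in dyCubeH d n (fun i => (k i:ℕ)), g y) *
        ∫ x in dyCubeH d m k', Set.indicator (dyCubeH d n (fun i => (k i:ℕ)))
          (fun _ => (1:ℝ)) x := by
    simp only [EnP]
    rw [integral_finset_sum _ (fun k _ => integrableOn_summand _ _ _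
      (volume_dyCubeH_ne_top m k'))]
    exact Finset.sum_congr rfl fun k _ => MeasureTheory.integral_const_mul _ _
  rw [hsum]
  rw [← Finset.sum_subset (Finset.subset_univ (childSet d m n k'))]
  · apply Finset.sum_congr rfl
    intro k hk
    have hsub : dyCubeH d n (fun i => (k i:ℕ)) ⊆ dyCubeH d m k' :=
      (Finset.mem_filter.1 hk).2
    rw [setIntegral_indicator (measurableSet_dyCubeH _ _),
      Set.inter_eq_self_of_subset_right hsub, setIntegral_const, smul_eq_mul, mul_one, measureReal_def,
      volume_dyCubeH_toReal]
    have heq : ((2:ℝ)^(n*d) * ∫ y in dyCubeH d n (fun i => (k i:ℕ)), g y) * dyVol d n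
        = ((2:ℝ)^(n*d) * dyVol d n) * ∫ y in dyCubeH d n (fun i => (k i:ℕ)), g y := by ring
    rw [heq, dyNorm, one_mul]
  · intro k _ hk
    have hdisj : dyCubeH d m k' ∩ dyCubeH d n (fun i => (k i:ℕ)) = ∅ := by
      rw [Set.inter_comm]
      by_contra hne
      exact hk (Finset.mem_filter.2 ⟨Finset.mem_univ _,
        dyCubeH_subset_of_nonempty_inter hmn (Set.nonempty_iff_ne_empty.2 hne)⟩)
    rw [setIntegral_indicator (measurableSet_dyCubeH _ _), hdisj]
    simp

/-- Coarse dyadic-cube integrals of `g - EnP g` vanish. -/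
lemma setIntegral_sub_EnP_coarse {m n : ℕ} (hmn : m ≤ n) {k' : Fin d → ℕ}
    (hk' : ∀ i, k' i < 2^m) {g : Euc d → ℝ} (hg : IntegrableOn g (uCube d)) :
    ∫ x in dyCube d m k', (g x - EnP d n g x) = 0 := by
  rw [setIntegral_dyCube_eq]
  rw [integral_sub (hg.mono_set (dyCubeH_subset_uCube hk'))
    (integrableOn_EnP g _ (volume_dyCubeH_ne_top m k'))]
  rw [setIntegral_EnP_coarse hmn hk' hg, sub_self]

/-- `L¹` distance between projections is controlled by coefficient differences. -/
lemma integral_abs_EnP_sub_le {n : ℕ} (g1 g2 : Euc d → ℝ) :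
    ∫ x in uCube d, |EnP d n g1 x - EnP d n g2 x|
      ≤ ∑ k : Fin d → Fin (2^n),
          |(∫ y in dyCubeH d n (fun i => (k i:ℕ)), g1 y)
            - ∫ y in dyCubeH d n (fun i => (k i:ℕ)), g2 y| := by
  set c : (Fin d → Fin (2^n)) → ℝ := fun k =>
    (2:ℝ)^(n*d) * ((∫ y in dyCubeH d n (fun i => (k i:ℕ)), g1 y)
      - ∫ y in dyCubeH d n (fun i => (k i:ℕ)), g2 y) with hc
  have hdiff : ∀ x, EnP d n g1 x - EnP d n g2 x = ∑ k : Fin d → Fin (2^n),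
      c k * Set.indicator (dyCubeH d n (fun i => (k i:ℕ))) (fun _ => (1:ℝ)) x := by
    intro x
    rw [EnP, EnP, ← Finset.sum_sub_distrib]
    apply Finset.sum_congr rfl
    intro k _
    rw [hc]
    ring
  have hbound : ∀ x, |EnP d n g1 x - EnP d n g2 x| ≤ ∑ k : Fin d → Fin (2^n),
      |c k| * Set.indicator (dyCubeH d n (fun i => (k i:ℕ))) (fun _ => (1:ℝ)) x := by
    intro x
    rw [hdiff x]
    refine le_trans (Finset.abs_sum_le_sum_abs _ _) (Finset.sum_le_sum fun k _ => ?_)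
    rw [abs_mul, abs_of_nonneg (Set.indicator_nonneg (fun _ _ => zero_le_one) x)]
  have hintl : IntegrableOn (fun x => |EnP d n g1 x - EnP d n g2 x|) (uCube d) :=
    ((integrableOn_EnP g1 _ volume_uCube_ne_top).sub
      (integrableOn_EnP g2 _ volume_uCube_ne_top)).abs
  have hintr : IntegrableOn (fun x => ∑ k : Fin d → Fin (2^n),
      |c k| * Set.indicator (dyCubeH d n (fun i => (k i:ℕ))) (fun _ => (1:ℝ)) x) (uCube d) :=
    MeasureTheory.integrable_finset_sum _ (fun k _ => integrableOn_summand _ _ _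
      volume_uCube_ne_top)
  refine le_trans (integral_mono hintl hintr hbound) ?_
  rw [integral_finset_sum _ (fun k _ => integrableOn_summand _ _ _ volume_uCube_ne_top)]
  apply Finset.sum_le_sum
  intro k _
  rw [MeasureTheory.integral_const_mul, setIntegral_uCube_indicator (fun i => (k i).isLt),
    setIntegral_const, smul_eq_mul, mul_one, measureReal_def, volume_dyCubeH_toReal, hc, abs_mul,
    abs_of_nonneg (by positivity : (0:ℝ) ≤ (2:ℝ)^(n*d))]
  have heq : (2:ℝ)^(n*d) * |(∫ y in dyCubeH d n (fun i => (k i:ℕ)), g1 y)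
        - ∫ y in dyCubeH d n (fun i => (k i:ℕ)), g2 y| * dyVol d n
      = ((2:ℝ)^(n*d) * dyVol d n) * |(∫ y in dyCubeH d n (fun i => (k i:ℕ)), g1 y)
        - ∫ y in dyCubeH d n (fun i => (k i:ℕ)), g2 y| := by ring
  rw [heq, dyNorm, one_mul]

section AM
/-- Validity predicate matching the side conditions of `hatV`. -/
def Valid (d : ℕ) (α : ℝ) (h : Euc d → ℝ) : Prop :=
  MemLp h ⊤ (volume.restrict (uCube d)) ∧
  ∀ n (k : Fin d → ℕ), (∀ i, k i < 2 ^ n) →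
    |∫ x in dyCube d n k, h x| ≤ dyVol d n ^ ((α + (d:ℝ) - 1) / d)

lemma Valid.neg {α : ℝ} {h : Euc d → ℝ} (hh : Valid d α h) : Valid d α (fun x => - h x) := by
  refine ⟨hh.1.neg, fun n k hk => ?_⟩
  rw [integral_neg, abs_neg]
  exact hh.2 n k hk

variable {α M : ℝ} {f : Euc d → ℝ}

lemma M_nonneg (hM : ∀ h, Valid d α h → (∫ x in uCube d, f x * h x) ≤ M) : 0 ≤ M := by
  have h0 : Valid d α (fun _ => (0:ℝ)) := by
    refine ⟨memLp_top_of_bound aestronglyMeasurable_const 0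
      (Filter.Eventually.of_forall (by simp)), fun n k hk => ?_⟩
    simp only [integral_zero, abs_zero]
    exact (dyVol_rpow_pos d n _).le
  have := hM _ h0
  simpa using this

lemma abs_integral_le_M (hM : ∀ h, Valid d α h → (∫ x in uCube d, f x * h x) ≤ M)
    {h : Euc d → ℝ} (hh : Valid d α h) : |∫ x in uCube d, f x * h x| ≤ M := by
  rcases abs_cases (∫ x in uCube d, f x * h x) with ⟨heq, _⟩ | ⟨heq, _⟩
  · rw [heq]; exact hM h hh
  · rw [heq]
    have h1 := hM _ hh.neg
    have h2 : ∫ x in uCube d, f x * (fun x => -h x) x = - ∫ x in uCube d, f x * h x := by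
      simp only [mul_neg]
      exact integral_neg _
    rw [h2] at h1
    exact h1

/-- Lemma A : bound on dyadic averages. -/
lemma avg_bound (hγ0 : 0 ≤ (α + (d:ℝ) - 1)/d) (hγ1 : (α + (d:ℝ) - 1)/d ≤ 1)
    (hf : IntegrableOn f (uCube d))
    (hM : ∀ h, Valid d α h → (∫ x in uCube d, f x * h x) ≤ M)
    {n : ℕ} {k : Fin d → ℕ} (hk : ∀ i, k i < 2^n) :
    |∫ x in dyCubeH d n k, f x| ≤ M * dyVol d n ^ (1 - (α + (d:ℝ) - 1)/d) := by
  set γ := (α + (d:ℝ) - 1)/d with hγ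
  set c := dyVol d n ^ (γ - 1) with hc
  have hc0 : 0 < c := dyVol_rpow_pos d n _
  set htest := fun x => c * Set.indicator (dyCube d n k) (fun _ => (1:ℝ)) x with hht
  have hmeas : Measurable htest :=
    (measurable_const.indicator (measurableSet_dyCube n k)).const_mul c
  have hbd : ∀ x, |htest x| ≤ c := fun x => by
    have := abs_mul_indicator_le c (dyCube d n k) x; rwa [abs_of_pos hc0] at this
  have hvalid : Valid d α htest := by
    refine ⟨memLp_top_of_bound hmeas.aestronglyMeasurable c
      (Filter.Eventually.of_forall (by simpa using hbd)), fun m k'' hk'' => ?_⟩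
    have hcomp : ∫ x in dyCube d m k'', htest x
        = c * (volume (dyCube d m k'' ∩ dyCube d n k)).toReal := by
      rw [hht]
      rw [MeasureTheory.integral_const_mul, setIntegral_indicator (measurableSet_dyCube n k),
        setIntegral_const, smul_eq_mul, mul_one, measureReal_def]
    rw [hcomp, abs_of_nonneg (by positivity)]
    rcases le_total n m with hnm | hnm
    · -- fine m : intersect ≤ volume of the m-cube
      have hle : (volume (dyCube d m k'' ∩ dyCube d n k)).toReal ≤ dyVol d m := by
        apply ENNReal.toReal_le_of_le_ofReal (dyVol_pos d m).le
        rw [← volume_dyCube' m k'']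
        exact measure_mono Set.inter_subset_left
      calc c * (volume (dyCube d m k'' ∩ dyCube d n k)).toReal ≤ c * dyVol d m := by
            exact mul_le_mul_of_nonneg_left hle hc0.le
        _ ≤ dyVol d m ^ γ := dy_ineq1 hγ1 hnm
    · have hle : (volume (dyCube d m k'' ∩ dyCube d n k)).toReal ≤ dyVol d n := by
        apply ENNReal.toReal_le_of_le_ofReal (dyVol_pos d n).le
        rw [← volume_dyCube' n k]
        exact measure_mono Set.inter_subset_right
      calc c * (volume (dyCube d m k'' ∩ dyCube d n k)).toReal ≤ c * dyVol d n := by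
            exact mul_le_mul_of_nonneg_left hle hc0.le
        _ ≤ dyVol d m ^ γ := dy_ineq2 hγ0 hnm
  have hcompf : ∫ x in uCube d, f x * htest x = c * ∫ x in dyCubeH d n k, f x := by
    rw [hht]
    have : ∀ x, f x * (c * Set.indicator (dyCube d n k) (fun _ => (1:ℝ)) x)
        = c * Set.indicator (dyCube d n k) f x := by
      intro x
      by_cases hx : x ∈ dyCube d n k <;> simp [hx] <;> ring
    simp_rw [this]
    rw [MeasureTheory.integral_const_mul, setIntegral_indicator (measurableSet_dyCube n k),
      Set.inter_eq_self_of_subset_right (dyCube_subset_uCube hk), setIntegral_dyCube_eq]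
  have habs := abs_integral_le_M hM hvalid
  rw [hcompf, abs_mul, abs_of_pos hc0] at habs
  have hinv : c⁻¹ = dyVol d n ^ (1 - γ) := by
    rw [hc, ← Real.rpow_neg (dyVol_pos d n).le]
    ring_nf
  calc |∫ x in dyCubeH d n k, f x| = c⁻¹ * (c * |∫ x in dyCubeH d n k, f x|) := by
        field_simp
    _ ≤ c⁻¹ * M := mul_le_mul_of_nonneg_left habs (by positivity)
    _ = M * dyVol d n ^ (1 - γ) := by rw [hinv]; ring
lemma integrable_mul_bdd {f g : Euc d → ℝ} (hf : IntegrableOn f (uCube d))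
    (hg : Measurable g) {C : ℝ} (hb : ∀ x, |g x| ≤ C) :
    IntegrableOn (fun x => f x * g x) (uCube d) := by
  have := Integrable.bdd_mul (c := C) hf hg.aestronglyMeasurable (Filter.Eventually.of_forall fun x => by
    rw [Real.norm_eq_abs]; exact hb x)
  exact this.congr (Filter.Eventually.of_forall fun x => mul_comm _ _)

/-- Lemma B : `L¹` distance to the projection. -/
lemma approx_bound (hγ0 : 0 ≤ (α + (d:ℝ) - 1)/d) (hγ1 : (α + (d:ℝ) - 1)/d ≤ 1)
    (hf : IntegrableOn f (uCube d))
    (hM : ∀ h, Valid d α h → (∫ x in uCube d, f x * h x) ≤ M) (n : ℕ) :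
    ∫ x in uCube d, |f x - EnP d n f x|
      ≤ 2 * dyVol d (n+1) ^ (1 - (α + (d:ℝ) - 1)/d) * M := by
  set γ := (α + (d:ℝ) - 1)/d with hγ
  set μ' := volume.restrict (uCube d) with hμ'
  obtain ⟨fmk, hsm, hfeq⟩ : ∃ fmk, StronglyMeasurable fmk ∧ f =ᵐ[μ'] fmk :=
    ⟨hf.1.mk f, hf.1.stronglyMeasurable_mk, hf.1.ae_eq_mk⟩
  set g : Euc d → ℝ := fun x => if 0 ≤ fmk x - EnP d n f x then (1:ℝ) else -1 with hg
  have hgmeas : Measurable g := by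
    apply Measurable.ite _ measurable_const measurable_const
    exact measurableSet_le measurable_const (hsm.measurable.sub (measurable_EnP n f))
  have hgbd : ∀ x, |g x| ≤ 1 := by
    intro x
    rw [hg]
    by_cases hx : 0 ≤ fmk x - EnP d n f x <;> simp [hx]
  have hgint : IntegrableOn g (uCube d) := integrableOn_of_bound hgmeas hgbd
  have hEngbd : ∀ x, |EnP d n g x| ≤ 1 := EnP_bound hgmeas zero_le_one hgbd
  set c := 2⁻¹ * dyVol d (n+1) ^ (γ - 1) with hc
  have hc0 : 0 < c := by
    rw [hc]
    have := dyVol_rpow_pos d (n+1) (γ-1)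
    positivity
  set h0 : Euc d → ℝ := fun x => c * (g x - EnP d n g x) with hh0
  have h0meas : Measurable h0 := (hgmeas.sub (measurable_EnP n g)).const_mul c
  have h0bd : ∀ x, |h0 x| ≤ c * 2 := by
    intro x
    rw [hh0, abs_mul, abs_of_pos hc0]
    apply mul_le_mul_of_nonneg_left _ hc0.le
    calc |g x - EnP d n g x| ≤ |g x| + |EnP d n g x| := abs_sub _ _
      _ ≤ 1 + 1 := add_le_add (hgbd x) (hEngbd x)
      _ = 2 := by norm_num
  have hvalid : Valid d α h0 := by
    refine ⟨memLp_top_of_bound h0meas.aestronglyMeasurable (c*2)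
      (Filter.Eventually.of_forall (by simpa using h0bd)), fun m k'' hk'' => ?_⟩
    rcases le_or_gt m n with hmn | hmn
    · have hz : ∫ x in dyCube d m k'', h0 x = 0 := by
        rw [hh0]
        rw [MeasureTheory.integral_const_mul, setIntegral_sub_EnP_coarse hmn hk'' hgint,
          mul_zero]
      rw [hz, abs_zero]
      exact (dyVol_rpow_pos d m _).le
    · have hb := abs_setIntegral_le (s := dyCube d m k'')
        (by rw [volume_dyCube']; exact ENNReal.ofReal_ne_top)
        h0meas.aestronglyMeasurable.restrict h0bd
      rw [volume_dyCube', ENNReal.toReal_ofReal (dyVol_pos d m).le] at hb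
      refine le_trans hb ?_
      have heq : c * 2 * dyVol d m = dyVol d (n+1) ^ (γ-1) * dyVol d m := by
        rw [hc]; ring
      rw [heq]
      exact dy_ineq1 hγ1 hmn
  -- the chain of equalities
  have hEnint : IntegrableOn (EnP d n f) (uCube d) := integrableOn_EnP f _ volume_uCube_ne_top
  have hfg : IntegrableOn (fun x => f x * g x) (uCube d) := integrable_mul_bdd hf hgmeas hgbd
  have hEnfg : IntegrableOn (fun x => EnP d n f x * g x) (uCube d) :=
    integrable_mul_bdd hEnint hgmeas hgbd
  have hfEng : IntegrableOn (fun x => f x * EnP d n g x) (uCube d) :=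
    integrable_mul_bdd hf (measurable_EnP n g) hEngbd
  have step1 : ∫ x in uCube d, |f x - EnP d n f x|
      = ∫ x in uCube d, (f x - EnP d n f x) * g x := by
    apply integral_congr_ae
    filter_upwards [hfeq] with x hx
    rw [hx]
    rcases le_or_gt 0 (fmk x - EnP d n f x) with h | h
    · rw [hg]; simp only [if_pos h]; rw [abs_of_nonneg h, mul_one]
    · rw [hg]; simp only [if_neg (not_le.2 h)]; rw [abs_of_neg h]; ring
  have step2 : ∫ x in uCube d, (f x - EnP d n f x) * g x
      = (∫ x in uCube d, f x * g x) - ∫ x in uCube d, EnP d n f x * g x := by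
    have : ∀ x, (f x - EnP d n f x) * g x = f x * g x - EnP d n f x * g x := by
      intro x; ring
    simp_rw [this]
    exact integral_sub hfg hEnfg
  have step3 : ∫ x in uCube d, EnP d n f x * g x = ∫ x in uCube d, f x * EnP d n g x := by
    have e1 : ∫ x in uCube d, g x * EnP d n f x
        = ∑ k : Fin d → Fin (2^n), ((2:ℝ)^(n*d) * ∫ y in dyCubeH d n (fun i => (k i:ℕ)), f y)
          * ∫ y in dyCubeH d n (fun i => (k i:ℕ)), g y := integral_mul_EnP hgint f
    have e2 : ∫ x in uCube d, f x * EnP d n g x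
        = ∑ k : Fin d → Fin (2^n), ((2:ℝ)^(n*d) * ∫ y in dyCubeH d n (fun i => (k i:ℕ)), g y)
          * ∫ y in dyCubeH d n (fun i => (k i:ℕ)), f y := integral_mul_EnP hf g
    have e3 : ∫ x in uCube d, EnP d n f x * g x = ∫ x in uCube d, g x * EnP d n f x := by
      simp_rw [mul_comm]
    rw [e3, e1, e2]
    apply Finset.sum_congr rfl
    intro k _
    ring
  have step4 : (∫ x in uCube d, f x * g x) - ∫ x in uCube d, f x * EnP d n g x
      = ∫ x in uCube d, f x * (g x - EnP d n g x) := by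
    have : ∀ x, f x * (g x - EnP d n g x) = f x * g x - f x * EnP d n g x := by
      intro x; ring
    simp_rw [this]
    exact (integral_sub hfg hfEng).symm
  have step5 : ∫ x in uCube d, f x * h0 x = c * ∫ x in uCube d, f x * (g x - EnP d n g x) := by
    have : ∀ x, f x * h0 x = c * (f x * (g x - EnP d n g x)) := by
      intro x; rw [hh0]; ring
    simp_rw [this]
    exact MeasureTheory.integral_const_mul c _
  have hle := hM h0 hvalid
  rw [step5] at hle
  have hfinal : ∫ x in uCube d, f x * (g x - EnP d n g x) ≤ c⁻¹ * M := by
    rw [← mul_le_mul_iff_right₀ hc0]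
    calc c * ∫ x in uCube d, f x * (g x - EnP d n g x) ≤ M := hle
      _ = c * (c⁻¹ * M) := by field_simp
  rw [step1, step2, step3, step4]
  refine le_trans hfinal ?_
  rw [hc, dyVol_rpow_inv]

end AM
theorem main (d : ℕ) (hd : 0 < d) (α : ℝ) (hα0 : 0 < α) (hα1 : α < 1)
    (f : ℕ → Euc d → ℝ) (hf : ∀ p, IntegrableOn (f p) (uCube d))
    (hV : (⨆ p, hatV d α (f p)) < ⊤) :
    ∃ φ : ℕ → ℕ, StrictMono φ ∧ ∃ g : Euc d → ℝ,
      IntegrableOn g (uCube d) ∧ hatV d α g < ⊤ ∧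
      Tendsto (fun p => ∫ x in uCube d, |f (φ p) x - g x|) atTop (nhds 0) := by
  classical
  obtain ⟨hγ0, hγlt⟩ := gamma_bounds (d := d) (α := α) hd hα0 hα1
  set γ := (α + (d:ℝ) - 1)/d with hγdef
  have hγ1 : γ ≤ 1 := hγlt.le
  set μ' := volume.restrict (uCube d) with hμ'
  set M := (⨆ p, hatV d α (f p)).toReal with hMdef
  have hM0 : 0 ≤ M := ENNReal.toReal_nonneg
  have hMp : ∀ p h, Valid d α h → (∫ x in uCube d, f p x * h x) ≤ M := by
    intro p h hh
    have hle : ENNReal.ofReal (∫ x in uCube d, f p x * h x) ≤ ⨆ p, hatV d α (f p) := by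
      refine le_trans ?_ (le_iSup _ p)
      rw [hatV]
      exact le_iSup_of_le h (le_iSup_of_le hh.1 (le_iSup_of_le hh.2 le_rfl))
    rcases le_or_gt (∫ x in uCube d, f p x * h x) 0 with h0 | h0
    · exact le_trans h0 hM0
    · have h2 := ENNReal.toReal_mono (ne_of_lt hV) hle
      rwa [ENNReal.toReal_ofReal h0.le] at h2
  -- bounded coefficient sequences
  set C : ℕ → ℝ := fun n => M * dyVol d n ^ (1 - γ) with hC
  set u : ℕ → (Σ n : ℕ, (Fin d → Fin (2^n))) → ℝ :=
    fun p i => ∫ x in dyCubeH d i.1 (fun j => ((i.2 j : ℕ))), f p x with hu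
  have humem : ∀ p, u p ∈ Set.univ.pi
      (fun i : (Σ n : ℕ, (Fin d → Fin (2^n))) => Set.Icc (-(C i.1)) (C i.1)) := by
    intro p i _
    rw [Set.mem_Icc]
    exact abs_le.1 (avg_bound hγ0 hγ1 (hf p) (hMp p) (fun j => (i.2 j).isLt))
  have hcpt : IsCompact (Set.univ.pi
      (fun i : (Σ n : ℕ, (Fin d → Fin (2^n))) => Set.Icc (-(C i.1)) (C i.1))) :=
    isCompact_univ_pi fun i => isCompact_Icc
  obtain ⟨x0, -, φ, hφ, hconv⟩ := hcpt.isSeqCompact humem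
  have hcoord : ∀ i, Tendsto (fun p => u (φ p) i) atTop (nhds (x0 i)) :=
    fun i => tendsto_pi_nhds.1 hconv i
  -- L¹ sequence
  set F : ℕ → Lp ℝ 1 μ' := fun p => ((hf (φ p)) : Integrable (f (φ p)) μ').toL1 _ with hF
  have hdistFF : ∀ p q, dist (F p) (F q) = ∫ x in uCube d, |f (φ p) x - f (φ q) x| := by
    intro p q
    rw [dist_eq_norm, MeasureTheory.L1.norm_eq_integral_norm]
    apply integral_congr_ae
    filter_upwards [MeasureTheory.Lp.coeFn_sub (F p) (F q),
      (hf (φ p)).coeFn_toL1, (hf (φ q)).coeFn_toL1] with x h1 h2 h3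
    rw [h1]
    simp only [Pi.sub_apply, Real.norm_eq_abs, hF]
    rw [h2, h3]
  -- the approximation bound sequence tends to zero
  have hB : Tendsto (fun n => 2 * dyVol d (n+1) ^ (1 - γ) * M) atTop (nhds 0) := by
    have h1 := (dyVol_rpow_tendsto (d := d) hd hγlt).const_mul (2 * M)
    rw [mul_zero] at h1
    refine h1.congr (fun n => by ring)
  have hcauchy : CauchySeq F := by
    rw [Metric.cauchySeq_iff]
    intro ε hε
    have hε4 : (0:ℝ) < ε/4 := by linarith
    obtain ⟨n, hn⟩ : ∃ n, 2 * dyVol d (n+1) ^ (1 - γ) * M < ε/4 :=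
      (hB.eventually_lt_const hε4).exists
    have hsumconv : Tendsto (fun p => ∑ k : Fin d → Fin (2^n),
        |u (φ p) ⟨n, k⟩ - x0 ⟨n, k⟩|) atTop (nhds 0) := by
      have h1 : ∀ k : Fin d → Fin (2^n),
          Tendsto (fun p => |u (φ p) ⟨n, k⟩ - x0 ⟨n, k⟩|) atTop (nhds 0) := by
        intro k
        have h2 := ((hcoord ⟨n, k⟩).sub (tendsto_const_nhds (x := x0 ⟨n, k⟩))).abs
        simpa using h2
      have := tendsto_finset_sum (Finset.univ : Finset (Fin d → Fin (2^n)))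
        (fun k _ => h1 k)
      simpa using this
    obtain ⟨N, hN⟩ := Filter.eventually_atTop.1 (hsumconv.eventually_lt_const hε4)
    refine ⟨N, fun p hp q hq => ?_⟩
    rw [hdistFF p q]
    -- triangle inequality through the projections
    have hintfp := hf (φ p)
    have hintfq := hf (φ q)
    have hEp : IntegrableOn (EnP d n (f (φ p))) (uCube d) :=
      integrableOn_EnP _ _ volume_uCube_ne_top
    have hEq' : IntegrableOn (EnP d n (f (φ q))) (uCube d) :=
      integrableOn_EnP _ _ volume_uCube_ne_top
    have tri : ∀ x, |f (φ p) x - f (φ q) x| ≤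
        |f (φ p) x - EnP d n (f (φ p)) x|
        + |EnP d n (f (φ p)) x - EnP d n (f (φ q)) x|
        + |EnP d n (f (φ q)) x - f (φ q) x| := by
      intro x
      calc |f (φ p) x - f (φ q) x|
          = |(f (φ p) x - EnP d n (f (φ p)) x)
            + (EnP d n (f (φ p)) x - EnP d n (f (φ q)) x)
            + (EnP d n (f (φ q)) x - f (φ q) x)| := by ring_nf
        _ ≤ _ := by
            refine le_trans (abs_add_le _ _) ?_
            exact add_le_add (abs_add_le _ _) le_rfl
    have hi1 : IntegrableOn (fun x => |f (φ p) x - f (φ q) x|) (uCube d) :=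
      (hintfp.sub hintfq).abs
    have hi2 : IntegrableOn (fun x => |f (φ p) x - EnP d n (f (φ p)) x|) (uCube d) :=
      (hintfp.sub hEp).abs
    have hi3 : IntegrableOn (fun x =>
        |EnP d n (f (φ p)) x - EnP d n (f (φ q)) x|) (uCube d) := (hEp.sub hEq').abs
    have hi4 : IntegrableOn (fun x => |EnP d n (f (φ q)) x - f (φ q) x|) (uCube d) :=
      (hEq'.sub hintfq).abs
    have hJ : IntegrableOn (fun x => |f (φ p) x - EnP d n (f (φ p)) x|
        + |EnP d n (f (φ p)) x - EnP d n (f (φ q)) x|) (uCube d) := hi2.add hi3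
    have hK : IntegrableOn (fun x => |f (φ p) x - EnP d n (f (φ p)) x|
        + |EnP d n (f (φ p)) x - EnP d n (f (φ q)) x|
        + |EnP d n (f (φ q)) x - f (φ q) x|) (uCube d) := hJ.add hi4
    have step : ∫ x in uCube d, |f (φ p) x - f (φ q) x|
        ≤ (∫ x in uCube d, |f (φ p) x - EnP d n (f (φ p)) x|)
          + (∫ x in uCube d, |EnP d n (f (φ p)) x - EnP d n (f (φ q)) x|)
          + ∫ x in uCube d, |EnP d n (f (φ q)) x - f (φ q) x| := by
      have h5 := integral_mono hi1 hK (fun x => tri x)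
      rwa [integral_add hJ hi4, integral_add hi2 hi3] at h5
    have b1 : ∫ x in uCube d, |f (φ p) x - EnP d n (f (φ p)) x| < ε/4 :=
      lt_of_le_of_lt (approx_bound hγ0 hγ1 hintfp (hMp (φ p)) n) hn
    have b3 : ∫ x in uCube d, |EnP d n (f (φ q)) x - f (φ q) x| < ε/4 := by
      have heq : ∀ x, |EnP d n (f (φ q)) x - f (φ q) x|
          = |f (φ q) x - EnP d n (f (φ q)) x| := fun x => abs_sub_comm _ _
      simp_rw [heq]
      exact lt_of_le_of_lt (approx_bound hγ0 hγ1 hintfq (hMp (φ q)) n) hn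
    have b2 : ∫ x in uCube d, |EnP d n (f (φ p)) x - EnP d n (f (φ q)) x| < ε/4 + ε/4 := by
      refine lt_of_le_of_lt (integral_abs_EnP_sub_le _ _) ?_
      have tri2 : ∀ k : Fin d → Fin (2^n),
          |(∫ y in dyCubeH d n (fun i => (k i:ℕ)), f (φ p) y)
            - ∫ y in dyCubeH d n (fun i => (k i:ℕ)), f (φ q) y|
          ≤ |u (φ p) ⟨n, k⟩ - x0 ⟨n, k⟩| + |u (φ q) ⟨n, k⟩ - x0 ⟨n, k⟩| := by
        intro k
        have : (∫ y in dyCubeH d n (fun i => (k i:ℕ)), f (φ p) y)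
            - ∫ y in dyCubeH d n (fun i => (k i:ℕ)), f (φ q) y
            = (u (φ p) ⟨n, k⟩ - x0 ⟨n, k⟩) - (u (φ q) ⟨n, k⟩ - x0 ⟨n, k⟩) := by
          rw [hu]
          ring_nf
        rw [this]
        exact abs_sub _ _
      refine lt_of_le_of_lt (Finset.sum_le_sum (fun k _ => tri2 k)) ?_
      rw [Finset.sum_add_distrib]
      exact add_lt_add (hN p hp) (hN q hq)
    linarith
  obtain ⟨G, hG⟩ := cauchySeq_tendsto_of_complete hcauchy
  have hdistG : ∀ p, dist (F p) G = ∫ x in uCube d, |f (φ p) x - G x| := by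
    intro p
    rw [dist_eq_norm, MeasureTheory.L1.norm_eq_integral_norm]
    apply integral_congr_ae
    filter_upwards [MeasureTheory.Lp.coeFn_sub (F p) G, (hf (φ p)).coeFn_toL1]
      with x h1 h2
    rw [h1]
    simp only [Pi.sub_apply, Real.norm_eq_abs, hF]
    rw [h2]
  have hTend0 : Tendsto (fun p => ∫ x in uCube d, |f (φ p) x - G x|) atTop (nhds 0) := by
    have := tendsto_iff_dist_tendsto_zero.1 hG
    refine this.congr (fun p => hdistG p)
  have hGint : IntegrableOn (⇑G) (uCube d) := MeasureTheory.L1.integrable_coeFn G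
  refine ⟨φ, hφ, ⇑G, hGint, ?_, hTend0⟩
  -- finiteness of the variation of the limit
  have hkey : ∀ h, Valid d α h → (∫ x in uCube d, G x * h x) ≤ M := by
    intro h hh
    obtain ⟨B, hB0, hae⟩ : ∃ B : ℝ, 0 ≤ B ∧ ∀ᵐ x ∂μ', |h x| ≤ B := by
      refine ⟨(eLpNormEssSup h μ').toReal, ENNReal.toReal_nonneg, ?_⟩
      have h1 := MeasureTheory.ae_le_eLpNormEssSup (f := h) (μ := μ')
      have hlt : eLpNormEssSup h μ' ≠ ⊤ := by
        have := hh.1.2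
        rwa [MeasureTheory.eLpNorm_exponent_top, lt_top_iff_ne_top] at this
      filter_upwards [h1] with x hx
      have := ENNReal.toReal_mono hlt hx
      simpa [Real.norm_eq_abs] using this
    have hmul : ∀ (w : Euc d → ℝ), IntegrableOn w (uCube d) →
        IntegrableOn (fun x => w x * h x) (uCube d) := by
      intro w hw
      have := Integrable.bdd_mul (μ := μ') (f := h) (g := w) (c := B) hw
        hh.1.aestronglyMeasurable
        (by filter_upwards [hae] with x hx; simpa [Real.norm_eq_abs] using hx)
      exact this.congr (Filter.Eventually.of_forall fun x => mul_comm _ _)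
    have hbound : ∀ p, ∫ x in uCube d, G x * h x
        ≤ M + B * ∫ x in uCube d, |f (φ p) x - G x| := by
      intro p
      have hsplit : ∫ x in uCube d, G x * h x
          = (∫ x in uCube d, f (φ p) x * h x)
            - ∫ x in uCube d, (f (φ p) x - G x) * h x := by
        have : ∀ x, (f (φ p) x - G x) * h x = f (φ p) x * h x - G x * h x := by
          intro x; ring
        simp_rw [this]
        rw [integral_sub (hmul _ (hf (φ p))) (hmul _ hGint)]
        ring
      have hw : IntegrableOn (fun x => f (φ p) x - G x) (uCube d) := (hf (φ p)).sub hGint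
      have habs : |∫ x in uCube d, (f (φ p) x - G x) * h x|
          ≤ B * ∫ x in uCube d, |f (φ p) x - G x| := by
        have h6 : |∫ x in uCube d, (f (φ p) x - G x) * h x|
            ≤ ∫ x in uCube d, |(f (φ p) x - G x) * h x| := by
          have h8 := norm_integral_le_integral_norm (μ := μ')
            (f := fun x => (f (φ p) x - G x) * h x)
          simpa only [Real.norm_eq_abs] using h8
        refine le_trans h6 ?_
        have h7 : ∫ x in uCube d, |(f (φ p) x - G x) * h x|
            ≤ ∫ x in uCube d, B * |f (φ p) x - G x| := by
          refine integral_mono_ae ((hmul _ hw).abs) (hw.abs.const_mul B) ?_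
          filter_upwards [hae] with x hx
          rw [abs_mul]
          calc |f (φ p) x - G x| * |h x| ≤ |f (φ p) x - G x| * B :=
                mul_le_mul_of_nonneg_left hx (abs_nonneg _)
            _ = B * |f (φ p) x - G x| := mul_comm _ _
        rwa [MeasureTheory.integral_const_mul] at h7
      have := hMp (φ p) h hh
      have h2 : - ∫ x in uCube d, (f (φ p) x - G x) * h x
          ≤ B * ∫ x in uCube d, |f (φ p) x - G x| := le_trans (neg_le_abs _) habs
      rw [hsplit]
      linarith
    have hlim : Tendsto (fun p => M + B * ∫ x in uCube d, |f (φ p) x - G x|)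
        atTop (nhds M) := by
      have h1 := hTend0.const_mul B
      rw [mul_zero] at h1
      have := h1.const_add M
      rwa [add_zero] at this
    exact ge_of_tendsto' hlim hbound
  have hle : hatV d α ⇑G ≤ ENNReal.ofReal M := by
    rw [hatV]
    refine iSup_le fun h => iSup_le fun h1 => iSup_le fun h2 => ?_
    exact ENNReal.ofReal_le_ofReal (hkey h ⟨h1, h2⟩)
  exact lt_of_le_of_lt hle ENNReal.ofReal_lt_top
end Aux

/-- **Compactness theorem for bounded fractional variation**
(final theorem of Section 7). -/
theorem fracVar_compactness (d : ℕ) (hd : 0 < d) (α : ℝ) (hα0 : 0 < α) (hα1 : α < 1)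
    (f : ℕ → Euc d → ℝ) (hf : ∀ p, IntegrableOn (f p) (uCube d))
    (hV : (⨆ p, hatV d α (f p)) < ⊤) :
    ∃ φ : ℕ → ℕ, StrictMono φ ∧ ∃ g : Euc d → ℝ,
      IntegrableOn g (uCube d) ∧ hatV d α g < ⊤ ∧
      Tendsto (fun p => ∫ x in uCube d, |f (φ p) x - g x|) atTop (nhds 0) :=
  Aux.main d hd α hα0 hα1 f hf hV

end
end
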